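/- arXiv:1508.03949 — 5 statements merged into one kernel-verified Lean document; each statement's English description precedes it below -/
import Mathlib

section
/- Let (A_n) be a sequence of symmetric real n×n matrices satisfying the mean-field assumption. Then there exists a sequence (Ã_n) of symmetric real n×n matrices with zero diagonal, also satisfying the mean-field assumption, such that max_{i,j∈[n]} |Ã_n(i,j)| → 0 as n → ∞, and for every q ≥ 2, symmetric real q×q matrix J and h ∈ ℝ^q: (1/n)·|Φ_n − Φ̃_n| → 0 and (1/n)·sup_{θ} |M_n(θ) − M̃_n(θ)| → 0, where Φ̃_n and M̃_n are defined by replacing A_n with Ã_n, and the supremum is over all n-tuples θ of probability vectors on {1,…,q}. -/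
open Finset Filter Real

noncomputable def pottsH {n q : ℕ} (A : Matrix (Fin n) (Fin n) ℝ)
    (J : Matrix (Fin q) (Fin q) ℝ) (h : Fin q → ℝ) (y : Fin n → Fin q) : ℝ :=
  (1 / 2) * ∑ i, ∑ j, A i j * J (y i) (y j) + ∑ i, h (y i)

noncomputable def pottsPhi {n q : ℕ} (A : Matrix (Fin n) (Fin n) ℝ)
    (J : Matrix (Fin q) (Fin q) ℝ) (h : Fin q → ℝ) : ℝ :=
  Real.log (∑ y : Fin n → Fin q, Real.exp (pottsH A J h y))

def probVec {q : ℕ} (θ : Fin q → ℝ) : Prop :=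
  (∀ r, 0 ≤ θ r) ∧ ∑ r, θ r = 1

noncomputable def meanField {n q : ℕ} (A : Matrix (Fin n) (Fin n) ℝ)
    (J : Matrix (Fin q) (Fin q) ℝ) (h : Fin q → ℝ) (θ : Fin n → Fin q → ℝ) : ℝ :=
  (1 / 2) * ∑ i, ∑ j, A i j * (∑ r, ∑ s, θ i r * θ j s * J r s)
    + ∑ i, ∑ r, h r * θ i r - ∑ i, ∑ r, θ i r * Real.log (θ i r)

def meanFieldAssumption (A : (n : ℕ) → Matrix (Fin n) (Fin n) ℝ) : Prop :=
  (∃ C : ℝ, ∀ n : ℕ, ∀ x : Fin n → ℝ, (∀ j, x j ∈ Set.Icc (0:ℝ) 1) →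
      ∑ i, |∑ j, A n i j * x j| ≤ C * n) ∧
  Tendsto (fun n : ℕ => Matrix.trace (A n * A n) / n) atTop (nhds 0)


/-!
Truncate `A_n` at the level `ε_n ≈ √(tr A_n² / n)`, which tends to `0` by the mean-field
assumption: drop the diagonal and every entry of modulus above `ε_n`. A dropped off-diagonal
entry `a` has `ε_n |a| ≤ a²` and a diagonal one `ε_n |a| ≤ a² + ε_n²`, so the dropped entries
have total mass `∑ |A_n - Ã_n| ≤ (tr A_n² + n ε_n²) / ε_n ≈ 2 n ε_n = o(n)`. The Hamiltonian and
the mean-field functional change by at most `½ max |J| ∑ |A_n - Ã_n|` uniformly in the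
configuration, and `log ∑ exp` is 1-Lipschitz for the sup norm, so both errors are `o(n)`. The
same bound transfers the row-sum condition to `Ã_n`, and `tr Ã_n² ≤ tr A_n²` the trace condition.
-/

section Truncate

variable {ι : Type*}

theorem Matrix.IsSymm.trace_mul_self [Fintype ι] {A : Matrix ι ι ℝ} (hA : A.IsSymm) :
    (A * A).trace = ∑ i, ∑ j, A i j ^ 2 :=
  Finset.sum_congr rfl fun i _ => Finset.sum_congr rfl fun j _ => by
    dsimp only
    rw [hA.apply i j, sq]

theorem Matrix.sum_abs_sum_mul_le_add [Fintype ι] {A B : Matrix ι ι ℝ} {x : ι → ℝ}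
    (hx : ∀ j, |x j| ≤ 1) :
    ∑ i, |∑ j, B i j * x j| ≤ ∑ i, |∑ j, A i j * x j| + ∑ i, ∑ j, |A i j - B i j| := by
  rw [← sum_add_distrib]
  refine sum_le_sum fun i _ => ?_
  calc |∑ j, B i j * x j| = |∑ j, A i j * x j - ∑ j, (A i j - B i j) * x j| := by
        simp_rw [sub_mul, sum_sub_distrib, sub_sub_cancel]
    _ ≤ |∑ j, A i j * x j| + |∑ j, (A i j - B i j) * x j| := abs_sub _ _
    _ ≤ |∑ j, A i j * x j| + ∑ j, |A i j - B i j| := by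
        gcongr
        refine (abs_sum_le_sum_abs _ _).trans (sum_le_sum fun j _ => ?_)
        rw [abs_mul]
        exact mul_le_of_le_one_right (abs_nonneg _) (hx j)

theorem Matrix.abs_sum_sum_mul_sub_le [Fintype ι] {A B : Matrix ι ι ℝ} {S : ι → ι → ℝ} {K : ℝ}
    (hS : ∀ i j, |S i j| ≤ K) :
    |∑ i, ∑ j, A i j * S i j - ∑ i, ∑ j, B i j * S i j| ≤ (∑ i, ∑ j, |A i j - B i j|) * K := by
  simp_rw [← sum_sub_distrib, ← sub_mul, sum_mul]
  refine (abs_sum_le_sum_abs _ _).trans (sum_le_sum fun i _ => ?_)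
  refine (abs_sum_le_sum_abs _ _).trans (sum_le_sum fun j _ => ?_)
  rw [abs_mul]
  exact mul_le_mul_of_nonneg_left (hS i j) (abs_nonneg _)

variable [DecidableEq ι]

noncomputable def Matrix.truncate (ε : ℝ) (A : Matrix ι ι ℝ) : Matrix ι ι ℝ :=
  Matrix.of fun i j => if i = j ∨ ε < |A i j| then 0 else A i j

theorem Matrix.IsSymm.truncate {A : Matrix ι ι ℝ} (hA : A.IsSymm) (ε : ℝ) :
    (A.truncate ε).IsSymm := by
  ext i j
  simp only [Matrix.transpose_apply, Matrix.truncate, Matrix.of_apply, hA.apply i j,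
    @eq_comm _ j i]

theorem Matrix.truncate_apply_self (ε : ℝ) (A : Matrix ι ι ℝ) (i : ι) : A.truncate ε i i = 0 := by
  simp [Matrix.truncate]

theorem Matrix.abs_truncate_apply_le {ε : ℝ} (hε : 0 ≤ ε) (A : Matrix ι ι ℝ) (i j : ι) :
    |A.truncate ε i j| ≤ ε := by
  simp only [Matrix.truncate, Matrix.of_apply]
  split_ifs with h
  · simpa using hε
  · exact not_lt.1 fun hlarge => h (Or.inr hlarge)

theorem Matrix.sq_truncate_apply_le (ε : ℝ) (A : Matrix ι ι ℝ) (i j : ι) :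
    A.truncate ε i j ^ 2 ≤ A i j ^ 2 := by
  simp only [Matrix.truncate, Matrix.of_apply]
  split_ifs
  · simpa using sq_nonneg (A i j)
  · rfl

theorem Matrix.sum_abs_sub_truncate_le [Fintype ι] {ε : ℝ} (hε : 0 < ε) {A : Matrix ι ι ℝ}
    (hA : ∑ i, ∑ j, A i j ^ 2 ≤ Fintype.card ι * ε ^ 2) :
    ∑ i, ∑ j, |A i j - A.truncate ε i j| ≤ 2 * Fintype.card ι * ε := by
  have entry (i j : ι) :
      ε * |A i j - A.truncate ε i j| ≤ A i j ^ 2 + if i = j then ε ^ 2 else 0 := by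
    have h_abs := abs_nonneg (A i j)
    have h_sq := sq_abs (A i j)
    simp only [Matrix.truncate, Matrix.of_apply]
    split_ifs with hdrop hdiag hdiag <;> simp only [sub_zero, sub_self, abs_zero, mul_zero]
    · nlinarith [sq_nonneg (|A i j| - ε)]
    · nlinarith [hdrop.resolve_left hdiag]
    · exact absurd (Or.inl hdiag) hdrop
    · positivity
  refine le_of_mul_le_mul_left ?_ hε
  calc ε * ∑ i, ∑ j, |A i j - A.truncate ε i j|
      = ∑ i, ∑ j, ε * |A i j - A.truncate ε i j| := by simp_rw [mul_sum]
    _ ≤ ∑ i, ∑ j, (A i j ^ 2 + if i = j then ε ^ 2 else 0) :=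
        sum_le_sum fun i _ => sum_le_sum fun j _ => entry i j
    _ = ∑ i, ∑ j, A i j ^ 2 + Fintype.card ι * ε ^ 2 := by
        simp [sum_add_distrib]
    _ ≤ ε * (2 * Fintype.card ι * ε) := by linarith

end Truncate

theorem Real.log_sum_exp_le_add {ι : Type*} [Fintype ι] [Nonempty ι] {f g : ι → ℝ} {M : ℝ}
    (hfg : ∀ y, f y ≤ g y + M) :
    log (∑ y, exp (f y)) ≤ log (∑ y, exp (g y)) + M := by
  have hpos (u : ι → ℝ) : 0 < ∑ y, exp (u y) := sum_pos (fun y _ => exp_pos _) univ_nonempty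
  rw [← log_exp M, ← log_mul (hpos g).ne' (exp_pos M).ne', sum_mul]
  exact log_le_log (hpos f) (sum_le_sum fun y _ => by rw [← exp_add]; exact exp_le_exp.2 (hfg y))

theorem Real.abs_log_sum_exp_sub_le {ι : Type*} [Fintype ι] [Nonempty ι] {f g : ι → ℝ} {M : ℝ}
    (hfg : ∀ y, |f y - g y| ≤ M) :
    |log (∑ y, exp (f y)) - log (∑ y, exp (g y))| ≤ M := by
  have h₁ := log_sum_exp_le_add (f := f) (g := g) fun y => by linarith [(abs_le.1 (hfg y)).2]
  have h₂ := log_sum_exp_le_add (f := g) (g := f) fun y => by linarith [(abs_le.1 (hfg y)).1]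
  exact abs_sub_le_iff.2 ⟨by linarith, by linarith⟩

section Perturbation

variable {n q : ℕ} (A B : Matrix (Fin n) (Fin n) ℝ) {J : Matrix (Fin q) (Fin q) ℝ} {K : ℝ}

theorem abs_pottsH_sub_le (hJ : ∀ r s, |J r s| ≤ K) (h : Fin q → ℝ) (y : Fin n → Fin q) :
    |pottsH A J h y - pottsH B J h y| ≤ (∑ i, ∑ j, |A i j - B i j|) * K / 2 := by
  have hdiff := Matrix.abs_sum_sum_mul_sub_le (A := A) (B := B) fun i j => hJ (y i) (y j)
  rw [show pottsH A J h y - pottsH B J h y = (∑ i, ∑ j, A i j * J (y i) (y j)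
      - ∑ i, ∑ j, B i j * J (y i) (y j)) / 2 by unfold pottsH; ring, abs_div, abs_two]
  linarith

theorem abs_pottsPhi_sub_le [NeZero q] (hJ : ∀ r s, |J r s| ≤ K) (h : Fin q → ℝ) :
    |pottsPhi A J h - pottsPhi B J h| ≤ (∑ i, ∑ j, |A i j - B i j|) * K / 2 :=
  abs_log_sum_exp_sub_le fun y => abs_pottsH_sub_le A B hJ h y

theorem abs_sum_sum_mul_le_of_probVec {θ θ' : Fin q → ℝ} (hθ : probVec θ) (hθ' : probVec θ')
    (hJ : ∀ r s, |J r s| ≤ K) : |∑ r, ∑ s, θ r * θ' s * J r s| ≤ K := by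
  have hw (r s : Fin q) : 0 ≤ θ r * θ' s := mul_nonneg (hθ.1 r) (hθ'.1 s)
  calc |∑ r, ∑ s, θ r * θ' s * J r s| ≤ ∑ r, ∑ s, θ r * θ' s * K := by
        refine (abs_sum_le_sum_abs _ _).trans (sum_le_sum fun r _ => ?_)
        refine (abs_sum_le_sum_abs _ _).trans (sum_le_sum fun s _ => ?_)
        rw [abs_mul, abs_of_nonneg (hw r s)]
        exact mul_le_mul_of_nonneg_left (hJ r s) (hw r s)
    _ = (∑ r, θ r) * (∑ s, θ' s) * K := by simp_rw [sum_mul_sum, sum_mul]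
    _ = K := by rw [hθ.2, hθ'.2, one_mul, one_mul]

theorem abs_meanField_sub_le (hJ : ∀ r s, |J r s| ≤ K) (h : Fin q → ℝ)
    {θ : Fin n → Fin q → ℝ} (hθ : ∀ i, probVec (θ i)) :
    |meanField A J h θ - meanField B J h θ| ≤ (∑ i, ∑ j, |A i j - B i j|) * K / 2 := by
  have hdiff := Matrix.abs_sum_sum_mul_sub_le (A := A) (B := B)
    fun i j => abs_sum_sum_mul_le_of_probVec (hθ i) (hθ j) hJ
  rw [show meanField A J h θ - meanField B J h θ
      = (∑ i, ∑ j, A i j * (∑ r, ∑ s, θ i r * θ j s * J r s)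
        - ∑ i, ∑ j, B i j * (∑ r, ∑ s, θ i r * θ j s * J r s)) / 2 by unfold meanField; ring,
    abs_div, abs_two]
  linarith

end Perturbation

theorem tendsto_div_natCast_of_le_mul {u v : ℕ → ℝ} (hu : ∀ n, 0 ≤ u n)
    (huv : ∀ n, u n ≤ n * v n) (hv : Tendsto v atTop (nhds 0)) :
    Tendsto (fun n => u n / n) atTop (nhds 0) := by
  refine tendsto_of_tendsto_of_tendsto_of_le_of_le' tendsto_const_nhds hv
    (Eventually.of_forall fun n => div_nonneg (hu n) n.cast_nonneg) ?_
  filter_upwards [eventually_gt_atTop 0] with n hn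
  rw [div_le_iff₀ (by exact_mod_cast hn), mul_comm]
  exact huv n

section TruncationSequence

variable (A : (n : ℕ) → Matrix (Fin n) (Fin n) ℝ)

/-- The summand `1 / (n + 1)` keeps the level positive when `A n = 0`. -/
noncomputable def truncationLevel (n : ℕ) : ℝ :=
  √((∑ i, ∑ j, A n i j ^ 2) / n + 1 / (n + 1))

noncomputable def truncation (n : ℕ) : Matrix (Fin n) (Fin n) ℝ :=
  (A n).truncate (truncationLevel A n)

theorem truncationLevel_pos (n : ℕ) : 0 < truncationLevel A n := by
  unfold truncationLevel
  positivity

theorem sum_sq_le_mul_truncationLevel_sq (n : ℕ) :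
    ∑ i, ∑ j, A n i j ^ 2 ≤ n * truncationLevel A n ^ 2 := by
  rw [truncationLevel, sq_sqrt (by positivity)]
  rcases n.eq_zero_or_pos with rfl | hn
  · simp
  · have : (0 : ℝ) ≤ n * (1 / (n + 1)) := by positivity
    rw [mul_add, mul_div_cancel₀ _ (by positivity)]
    linarith

theorem sum_abs_sub_truncation_le (n : ℕ) :
    ∑ i, ∑ j, |A n i j - truncation A n i j| ≤ 2 * n * truncationLevel A n := by
  simpa [truncation] using (A n).sum_abs_sub_truncate_le (truncationLevel_pos A n)
    (by simpa using sum_sq_le_mul_truncationLevel_sq A n)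

variable {A}

theorem tendsto_truncationLevel (hsymm : ∀ n, (A n).IsSymm) (hMF : meanFieldAssumption A) :
    Tendsto (truncationLevel A) atTop (nhds 0) := by
  have htr (n : ℕ) := (hsymm n).trace_mul_self
  have h := (hMF.2.add tendsto_one_div_add_atTop_nhds_zero_nat).sqrt
  simp only [htr, add_zero, sqrt_zero] at h
  exact h

theorem meanFieldAssumption_truncation (hsymm : ∀ n, (A n).IsSymm) (hMF : meanFieldAssumption A) :
    meanFieldAssumption (truncation A) := by
  obtain ⟨L, hL⟩ := (tendsto_truncationLevel hsymm hMF).bddAbove_range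
  obtain ⟨⟨C, hC⟩, htrace⟩ := hMF
  refine ⟨⟨C + 2 * L, fun n x hx => ?_⟩, ?_⟩
  · have hx_abs (j : Fin n) : |x j| ≤ 1 := abs_le.2 ⟨by linarith [(hx j).1], (hx j).2⟩
    calc ∑ i, |∑ j, truncation A n i j * x j|
        ≤ ∑ i, |∑ j, A n i j * x j| + ∑ i, ∑ j, |A n i j - truncation A n i j| :=
          Matrix.sum_abs_sum_mul_le_add hx_abs
      _ ≤ C * n + 2 * n * L := by
          gcongr
          · exact hC n x hx
          · exact (sum_abs_sub_truncation_le A n).trans (by gcongr; exact hL ⟨n, rfl⟩)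
      _ = (C + 2 * L) * n := by ring
  · have htr (n : ℕ) := ((hsymm n).truncate (truncationLevel A n)).trace_mul_self
    refine tendsto_of_tendsto_of_tendsto_of_le_of_le tendsto_const_nhds htrace
      (fun n => ?_) (fun n => ?_)
    · simp only [truncation, htr]
      positivity
    · simp only [truncation, htr, (hsymm n).trace_mul_self]
      exact div_le_div_of_nonneg_right
        (sum_le_sum fun i _ => sum_le_sum fun j _ => Matrix.sq_truncate_apply_le _ _ _ _)
        n.cast_nonneg

theorem tendsto_iSup_abs_truncation
    (hsymm : ∀ n, (A n).IsSymm) (hMF : meanFieldAssumption A) :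
    Tendsto (fun n => ⨆ i, ⨆ j, |truncation A n i j|) atTop (nhds 0) := by
  refine tendsto_of_tendsto_of_tendsto_of_le_of_le tendsto_const_nhds
    (tendsto_truncationLevel hsymm hMF)
    (fun n => Real.iSup_nonneg fun i => Real.iSup_nonneg fun j => abs_nonneg _) fun n => ?_
  have hpos := (truncationLevel_pos A n).le
  exact Real.iSup_le (fun i => Real.iSup_le (fun j => Matrix.abs_truncate_apply_le hpos _ _ _)
    hpos) hpos

theorem tendsto_div_of_le_sum_abs_sub_truncation
    (hsymm : ∀ n, (A n).IsSymm) (hMF : meanFieldAssumption A)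
    {u : ℕ → ℝ} {K : ℝ} (hK : 0 ≤ K)
    (hu₀ : ∀ n, 0 ≤ u n)
    (hu : ∀ n, u n ≤ (∑ i, ∑ j, |A n i j - truncation A n i j|) * K / 2) :
    Tendsto (fun n => u n / n) atTop (nhds 0) := by
  refine tendsto_div_natCast_of_le_mul hu₀ (fun n => ?_)
    (by simpa using (tendsto_truncationLevel hsymm hMF).mul_const K)
  calc u n ≤ (∑ i, ∑ j, |A n i j - truncation A n i j|) * K / 2 := hu n
    _ ≤ 2 * n * truncationLevel A n * K / 2 := by gcongr; exact sum_abs_sub_truncation_le A n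
    _ = n * (truncationLevel A n * K) := by ring

variable {q : ℕ} [NeZero q] (J : Matrix (Fin q) (Fin q) ℝ) (h : Fin q → ℝ)

theorem tendsto_abs_pottsPhi_sub_truncation
    (hsymm : ∀ n, (A n).IsSymm) (hMF : meanFieldAssumption A) :
    Tendsto (fun n : ℕ => |pottsPhi (A n) J h - pottsPhi (truncation A n) J h| / n)
      atTop (nhds 0) := by
  obtain ⟨K, hK⟩ := Finite.exists_le fun p : Fin q × Fin q => |J p.1 p.2|
  exact tendsto_div_of_le_sum_abs_sub_truncation hsymm hMF ((abs_nonneg _).trans (hK (0, 0)))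
    (fun n => abs_nonneg _) fun n => abs_pottsPhi_sub_le _ _ (fun r s => hK (r, s)) h

theorem tendsto_sSup_abs_meanField_sub_truncation
    (hsymm : ∀ n, (A n).IsSymm) (hMF : meanFieldAssumption A) :
    Tendsto (fun n : ℕ =>
        sSup {x | ∃ θ : Fin n → Fin q → ℝ, (∀ i, probVec (θ i)) ∧
          x = |meanField (A n) J h θ - meanField (truncation A n) J h θ|} / n)
      atTop (nhds 0) := by
  obtain ⟨K, hK⟩ := Finite.exists_le fun p : Fin q × Fin q => |J p.1 p.2|
  have hK₀ : 0 ≤ K := (abs_nonneg _).trans (hK (0, 0))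
  refine tendsto_div_of_le_sum_abs_sub_truncation hsymm hMF hK₀
    (fun n => Real.sSup_nonneg ?_) fun n => Real.sSup_le ?_ (by positivity)
  · rintro _ ⟨θ, -, rfl⟩
    exact abs_nonneg _
  · rintro _ ⟨θ, hθ, rfl⟩
    exact abs_meanField_sub_le _ _ (fun r s => hK (r, s)) h hθ

end TruncationSequence

theorem truncation_lemma
    (A : (n : ℕ) → Matrix (Fin n) (Fin n) ℝ) (hsymm : ∀ n, (A n).IsSymm)
    (hMF : meanFieldAssumption A) :
    ∃ At : (n : ℕ) → Matrix (Fin n) (Fin n) ℝ,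
      (∀ n, (At n).IsSymm) ∧
      (∀ n : ℕ, ∀ i : Fin n, At n i i = 0) ∧
      meanFieldAssumption At ∧
      Tendsto (fun n : ℕ => ⨆ i : Fin n, ⨆ j : Fin n, |At n i j|) atTop (nhds 0) ∧
      (∀ q : ℕ, 2 ≤ q → ∀ J : Matrix (Fin q) (Fin q) ℝ, J.IsSymm → ∀ h : Fin q → ℝ,
        Tendsto (fun n : ℕ => |pottsPhi (A n) J h - pottsPhi (At n) J h| / n)
          atTop (nhds 0) ∧
        Tendsto (fun n : ℕ =>
            sSup {x | ∃ θ : Fin n → Fin q → ℝ, (∀ i, probVec (θ i)) ∧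
              x = |meanField (A n) J h θ - meanField (At n) J h θ|} / n)
          atTop (nhds 0)) := by
  refine ⟨truncation A, fun n => (hsymm n).truncate _, fun n i => Matrix.truncate_apply_self _ _ i,
    meanFieldAssumption_truncation hsymm hMF, tendsto_iSup_abs_truncation hsymm hMF,
    fun q hq J _ h => ?_⟩
  have : NeZero q := ⟨by omega⟩
  exact ⟨tendsto_abs_pottsPhi_sub_truncation J h hsymm hMF,
    tendsto_sSup_abs_meanField_sub_truncation J h hsymm hMF⟩
end

section
/- Let (A_n) be a sequence of symmetric real n×n matrices satisfying the mean-field assumption, with A_n(i,i) = 0 for all i and max_{i,j∈[n]} |A_n(i,j)| → 0 as n → ∞. Let Y be a random element of {1,…,q}^n with law μ_n, and let X, X̂, γ and F_n be as defined in the context. Then (1/n²)·E_{μ_n}[ (F_n(X) − F_n(X̂))² ] → 0 as n → ∞. -/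
open Finset Filter Real

/-- The Potts probability mass function `μ_n(y) = exp(H(y)) / Σ_{y'} exp(H(y'))`. -/
noncomputable def pottsWeight {n q : ℕ} (A : Matrix (Fin n) (Fin n) ℝ)
    (J : Matrix (Fin q) (Fin q) ℝ) (h : Fin q → ℝ) (y : Fin n → Fin q) : ℝ :=
  Real.exp (pottsH A J h y) / ∑ y' : Fin n → Fin q, Real.exp (pottsH A J h y')

/-- The 0/1 encoding `x_{ir} = 1{y_i = r}` of a configuration. -/
noncomputable def xVec {n q : ℕ} (y : Fin n → Fin q) : Fin n → Fin q → ℝ :=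
  fun i r => if y i = r then 1 else 0

/-- `γ_{ir}(z) = Σ_s J(r,s) Σ_j A(i,j) z_{js}`. -/
noncomputable def gam {n q : ℕ} (A : Matrix (Fin n) (Fin n) ℝ)
    (J : Matrix (Fin q) (Fin q) ℝ) (z : Fin n → Fin q → ℝ) (i : Fin n) (r : Fin q) : ℝ :=
  ∑ s, J r s * ∑ j, A i j * z j s

/-- The conditional expectation vector `x̂`. -/
noncomputable def xHat {n q : ℕ} (A : Matrix (Fin n) (Fin n) ℝ)
    (J : Matrix (Fin q) (Fin q) ℝ) (h : Fin q → ℝ) (y : Fin n → Fin q)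
    (i : Fin n) (r : Fin q) : ℝ :=
  Real.exp (gam A J (xVec y) i r + h r) / ∑ s, Real.exp (gam A J (xVec y) i s + h s)

/-- The quadratic part of the Hamiltonian, as a function on `[0,1]^{n×q}`. -/
noncomputable def Fquad {n q : ℕ} (A : Matrix (Fin n) (Fin n) ℝ)
    (J : Matrix (Fin q) (Fin q) ℝ) (z : Fin n → Fin q → ℝ) : ℝ :=
  (1 / 2) * ∑ i, ∑ j, A i j * ∑ r, ∑ s, J r s * z i r * z j s

/-!
Write `x = xVec y`, `x̂ = xHat y`, `u_i = ∑_r (x_ir - x̂_ir) (γ_ir(x) + γ_ir(x̂))`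
(`siteTerm`) and `m_i = ∑_r (|γ_ir(x)| + |γ_ir(x̂)|) ≥ |u_i|` (`siteBound`). By symmetry of
`A` and `J`, `F(x) - F(x̂) = ½ ∑_i u_i`, so it suffices to bound `∑_{i,k} E[u_i u_k]` by
`o(n²)`. The mean-field bound gives `∑_i m_i = O(n)`, and `m_i = O(n α)` with
`α = max |A_ij|`, which disposes of the diagonal.

For `k ≠ i`: as `A_ii = 0`, `x̂_i` is the conditional law of `y_i` given the other spins, so
`E[(x_ir - x̂_ir) g] = 0` whenever `g` does not depend on `y_i`. Subtracting the value of
`(γ_ir(x) + γ_ir(x̂)) u_k` at the configuration with `y_i` reset to `0`, only the effect of a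
single spin flip remains. Flipping `y_i` moves `γ_k(x)` by `O(|A_ki|)`, hence (softmax is
Lipschitz) `x̂_j` by `O(|A_ji|)` and `γ_k(x̂)` by `O((|A||A|)_ki)`. The resulting error terms sum
to `O(n² α + n tr(A²))`, except `(|A||A|)_ki E[m_i]`; bounding `E[u_i u_k]` with `i` and `k`
in both roles and using `min(a, b) ≤ √(ab)`, Cauchy–Schwarz bounds its sum by
`tr(A²) ∑_i E[m_i]`.
-/

namespace Potts

open Function

section Softmax

variable {ι : Type*} [Fintype ι]

noncomputable def softmax (a : ι → ℝ) (r : ι) : ℝ := exp (a r) / ∑ s, exp (a s)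

variable [Nonempty ι] (a : ι → ℝ)

lemma sum_exp_pos : 0 < ∑ s, exp (a s) := sum_pos (fun s _ => exp_pos (a s)) univ_nonempty

lemma softmax_nonneg (r : ι) : 0 ≤ softmax a r := div_nonneg (exp_pos _).le (sum_exp_pos a).le

lemma softmax_le_one (r : ι) : softmax a r ≤ 1 :=
  div_le_one_of_le₀ (single_le_sum (fun s _ => (exp_pos (a s)).le) (mem_univ r))
    (sum_exp_pos a).le

lemma sum_softmax : ∑ r, softmax a r = 1 := by
  simp_rw [softmax, ← sum_div, div_self (sum_exp_pos a).ne']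

lemma softmax_le_exp_mul_softmax {b : ι → ℝ} {δ : ℝ} (hab : ∀ s, |a s - b s| ≤ δ)
    (r : ι) : softmax a r ≤ exp (2 * δ) * softmax b r := by
  have hnum : exp (a r) ≤ exp δ * exp (b r) := by
    rw [← exp_add]; exact exp_le_exp.2 (by linarith [(abs_le.1 (hab r)).2])
  have hden : exp (-δ) * ∑ s, exp (b s) ≤ ∑ s, exp (a s) := by
    rw [mul_sum]
    refine sum_le_sum fun s _ => ?_
    rw [← exp_add]; exact exp_le_exp.2 (by linarith [(abs_le.1 (hab s)).1])
  have hexp : exp (2 * δ) * exp (-δ) = exp δ := by rw [← exp_add]; ring_nf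
  rw [softmax, softmax, mul_div_assoc', div_le_div_iff₀ (sum_exp_pos a) (sum_exp_pos b)]
  calc exp (a r) * ∑ s, exp (b s) ≤ exp δ * exp (b r) * ∑ s, exp (b s) := by gcongr
    _ = exp (2 * δ) * exp (b r) * (exp (-δ) * ∑ s, exp (b s)) := by rw [← hexp]; ring
    _ ≤ exp (2 * δ) * exp (b r) * ∑ s, exp (a s) := by gcongr

lemma abs_softmax_sub_softmax_le {b : ι → ℝ} {δ : ℝ} (hδ : 2 * δ ≤ 1)
    (hab : ∀ s, |a s - b s| ≤ δ) (r : ι) : |softmax a r - softmax b r| ≤ 4 * δ := by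
  have hδ0 : 0 ≤ δ := (abs_nonneg _).trans (hab r)
  have hexp : exp (2 * δ) - 1 ≤ 4 * δ := by
    have h2δ : |2 * δ| = 2 * δ := abs_of_nonneg (by linarith)
    have := (le_abs_self _).trans (Real.abs_exp_sub_one_le (h2δ.trans_le hδ))
    linarith
  have hexp0 : 0 ≤ exp (2 * δ) - 1 := by linarith [add_one_le_exp (2 * δ)]
  have key : ∀ a b : ι → ℝ, (∀ s, |a s - b s| ≤ δ) →
      softmax a r - softmax b r ≤ 4 * δ := fun a b hab =>
      calc softmax a r - softmax b r ≤ (exp (2 * δ) - 1) * softmax b r := by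
            linarith [softmax_le_exp_mul_softmax a hab r]
        _ ≤ exp (2 * δ) - 1 := mul_le_of_le_one_right hexp0 (softmax_le_one b r)
        _ ≤ 4 * δ := hexp
  exact abs_sub_le_iff.2 ⟨key a b hab, key b a fun s => abs_sub_comm (a s) (b s) ▸ hab s⟩

end Softmax

section MatrixQuantities

variable {ι : Type*} (A : Matrix ι ι ℝ)

noncomputable def maxAbsEntry : ℝ := ⨆ i, ⨆ j, |A i j|

lemma maxAbsEntry_nonneg : 0 ≤ maxAbsEntry A :=
  Real.iSup_nonneg fun _ => Real.iSup_nonneg fun _ => abs_nonneg _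

variable [Fintype ι]

def absSum : ℝ := ∑ i, ∑ j, |A i j|

def absMulAbs (k i : ι) : ℝ := ∑ j, |A k j| * |A j i|

def MeanFieldBound (B : ℝ) : Prop :=
  ∀ x : ι → ℝ, (∀ j, x j ∈ Set.Icc 0 1) → ∑ i, |∑ j, A i j * x j| ≤ B

lemma absSum_nonneg : 0 ≤ absSum A := by unfold absSum; positivity

lemma absMulAbs_nonneg (k i : ι) : 0 ≤ absMulAbs A k i := by unfold absMulAbs; positivity

variable {A}

lemma sum_abs_le_absSum (i : ι) : ∑ j, |A i j| ≤ absSum A :=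
  single_le_sum (f := fun i => ∑ j, |A i j|) (fun _ _ => by positivity) (mem_univ i)

lemma abs_le_maxAbsEntry (i j : ι) : |A i j| ≤ maxAbsEntry A :=
  (le_ciSup (Finite.bddAbove_range fun j => |A i j|) j).trans
    (le_ciSup (Finite.bddAbove_range fun i => ⨆ j, |A i j|) i)

lemma sum_abs_le_card_mul_maxAbsEntry (j : ι) :
    ∑ i, |A i j| ≤ Fintype.card ι * maxAbsEntry A :=
  (sum_le_sum fun i _ => abs_le_maxAbsEntry i j).trans_eq (by simp)

lemma absMulAbs_comm (hA : A.IsSymm) (k i : ι) : absMulAbs A k i = absMulAbs A i k :=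
  sum_congr rfl fun j _ => by rw [hA.apply k j, hA.apply j i, mul_comm]

lemma trace_mul_self_eq_sum_absMulAbs (hA : A.IsSymm) :
    (A * A).trace = ∑ i, absMulAbs A i i :=
  sum_congr rfl fun i _ => by
    rw [Matrix.diag_apply, Matrix.mul_apply]
    exact sum_congr rfl fun j _ => by rw [hA.apply i j, abs_mul_abs_self]

lemma sum_sum_mul_mul_absMulAbs_le (hA : A.IsSymm) (v : ι → ℝ) :
    ∑ i, ∑ k, v i * v k * absMulAbs A i k ≤ (A * A).trace * ∑ i, v i ^ 2 := by
  have hcol : ∀ j, ∑ i, |A i j| ^ 2 = absMulAbs A j j := fun j =>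
    sum_congr rfl fun i _ => by rw [sq, hA.apply i j]
  calc ∑ i, ∑ k, v i * v k * absMulAbs A i k
        = ∑ j, (∑ i, v i * |A i j|) * ∑ k, v k * |A j k| := by
        simp only [absMulAbs, sum_mul, mul_sum]
        conv_lhs => arg 2; ext i; rw [sum_comm]
        conv_rhs => arg 2; ext j; rw [sum_comm]
        rw [sum_comm]
        exact sum_congr rfl fun j _ => sum_congr rfl fun i _ => sum_congr rfl fun k _ => by ring
    _ = ∑ j, (∑ i, v i * |A i j|) ^ 2 :=
        sum_congr rfl fun j _ => by
          rw [sq]; congr 1; exact sum_congr rfl fun k _ => by rw [hA.apply k j]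
    _ ≤ ∑ j, (∑ i, v i ^ 2) * ∑ i, |A i j| ^ 2 :=
        sum_le_sum fun j _ => sum_mul_sq_le_sq_mul_sq _ _ _
    _ = (A * A).trace * ∑ i, v i ^ 2 := by
        rw [← mul_sum, trace_mul_self_eq_sum_absMulAbs hA, mul_comm]
        simp only [hcol]

end MatrixQuantities

lemma sum_sum_update {ι α M : Type*} [DecidableEq ι] [Fintype α] [Fintype (ι → α)]
    [AddCommMonoid M] (F : (ι → α) → M) (i : ι) :
    ∑ y, ∑ t, F (update y i t) = Fintype.card α • ∑ y, F y := by
  let e : Equiv.Perm ((ι → α) × α) :=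
    Involutive.toPerm (fun p => (update p.1 i p.2, p.1 i)) fun p => by simp
  calc ∑ y, ∑ t, F (update y i t) = ∑ p, F (e p).1 :=
        (Fintype.sum_prod_type fun p => F (e p).1).symm
    _ = ∑ p : (ι → α) × α, F p.1 := Equiv.sum_comp e (fun p => F p.1)
    _ = Fintype.card α • ∑ y, F y := by
      rw [Fintype.sum_prod_type, ← sum_nsmul]
      exact sum_congr rfl fun y _ => by simp

lemma sum_update_eq_add_sum_erase {ι α M : Type*} [Fintype ι] [DecidableEq ι] [AddCommMonoid M]
    (f : ι → α → M) (y : ι → α) (i : ι) (t : α) :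
    ∑ j, f j (update y i t j) = f i t + ∑ j ∈ univ.erase i, f j (y j) := by
  rw [← add_sum_erase _ _ (mem_univ i), update_self]
  congr 1
  exact sum_congr rfl fun j hj => by rw [update_of_ne (ne_of_mem_erase hj)]

section Expectation

variable {n q : ℕ} (A : Matrix (Fin n) (Fin n) ℝ) (J : Matrix (Fin q) (Fin q) ℝ)
  (h : Fin q → ℝ)

noncomputable def pottsExpect (f : (Fin n → Fin q) → ℝ) : ℝ :=
  ∑ y, pottsWeight A J h y * f y

lemma pottsWeight_nonneg (y : Fin n → Fin q) : 0 ≤ pottsWeight A J h y :=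
  div_nonneg (exp_pos _).le (sum_nonneg fun _ _ => (exp_pos _).le)

lemma sum_pottsWeight [NeZero q] : ∑ y, pottsWeight A J h y = 1 := by
  simp_rw [pottsWeight, ← sum_div]
  exact div_self (sum_pos (fun _ _ => exp_pos _) univ_nonempty).ne'

variable {A J h}

lemma pottsExpect_mono {f g : (Fin n → Fin q) → ℝ} (hfg : ∀ y, f y ≤ g y) :
    pottsExpect A J h f ≤ pottsExpect A J h g :=
  sum_le_sum fun y _ => mul_le_mul_of_nonneg_left (hfg y) (pottsWeight_nonneg A J h y)

lemma pottsExpect_nonneg {f : (Fin n → Fin q) → ℝ} (hf : ∀ y, 0 ≤ f y) :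
    0 ≤ pottsExpect A J h f :=
  sum_nonneg fun y _ => mul_nonneg (pottsWeight_nonneg A J h y) (hf y)

lemma pottsExpect_le_of_le [NeZero q] {f : (Fin n → Fin q) → ℝ} {c : ℝ}
    (hf : ∀ y, f y ≤ c) : pottsExpect A J h f ≤ c :=
  (pottsExpect_mono hf).trans_eq <| by rw [pottsExpect, ← sum_mul, sum_pottsWeight, one_mul]

lemma abs_pottsExpect_le (f : (Fin n → Fin q) → ℝ) :
    |pottsExpect A J h f| ≤ pottsExpect A J h fun y => |f y| :=
  (abs_sum_le_sum_abs _ _).trans_eq <| sum_congr rfl fun y _ => by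
    rw [abs_mul, abs_of_nonneg (pottsWeight_nonneg A J h y)]

lemma pottsExpect_add (f g : (Fin n → Fin q) → ℝ) :
    pottsExpect A J h (fun y => f y + g y) = pottsExpect A J h f + pottsExpect A J h g := by
  simp only [pottsExpect, mul_add, sum_add_distrib]

lemma pottsExpect_const_mul (c : ℝ) (f : (Fin n → Fin q) → ℝ) :
    pottsExpect A J h (fun y => c * f y) = c * pottsExpect A J h f := by
  simp only [pottsExpect, mul_sum]; exact sum_congr rfl fun _ _ => by ring

lemma pottsExpect_sum {ι : Type*} (s : Finset ι) (f : ι → (Fin n → Fin q) → ℝ) :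
    pottsExpect A J h (fun y => ∑ i ∈ s, f i y) = ∑ i ∈ s, pottsExpect A J h (f i) := by
  simp only [pottsExpect, mul_sum]; exact sum_comm

end Expectation

section Configurations

variable {n q : ℕ} (A : Matrix (Fin n) (Fin n) ℝ) (J : Matrix (Fin q) (Fin q) ℝ)
  (h : Fin q → ℝ)

lemma xVec_mem_Icc (y : Fin n → Fin q) (i : Fin n) (r : Fin q) : xVec y i r ∈ Set.Icc 0 1 := by
  by_cases hy : y i = r <;> simp [xVec, hy]

lemma xHat_eq_softmax (y : Fin n → Fin q) (i : Fin n) :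
    xHat A J h y i = softmax fun s => gam A J (xVec y) i s + h s := rfl

lemma xHat_mem_Icc [NeZero q] (y : Fin n → Fin q) (i : Fin n) (r : Fin q) :
    xHat A J h y i r ∈ Set.Icc 0 1 := by
  rw [xHat_eq_softmax]; exact ⟨softmax_nonneg _ r, softmax_le_one _ r⟩

lemma sum_xHat [NeZero q] (y : Fin n → Fin q) (i : Fin n) : ∑ r, xHat A J h y i r = 1 := by
  rw [xHat_eq_softmax]; exact sum_softmax _

lemma gam_xVec (y : Fin n → Fin q) (i : Fin n) (r : Fin q) :
    gam A J (xVec y) i r = ∑ j, A i j * J r (y j) := by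
  simp only [gam, xVec, mul_ite, mul_one, mul_zero, mul_sum]
  rw [sum_comm]
  exact sum_congr rfl fun j _ => by simp [mul_comm]

noncomputable def resid (y : Fin n → Fin q) (i : Fin n) (r : Fin q) : ℝ :=
  xVec y i r - xHat A J h y i r

variable {A J h}

lemma gam_xVec_update_self (hdiag : ∀ i, A i i = 0) (y : Fin n → Fin q) (i : Fin n)
    (c r : Fin q) : gam A J (xVec (update y i c)) i r = gam A J (xVec y) i r := by
  simp only [gam_xVec]
  exact sum_congr rfl fun j _ => by
    rcases eq_or_ne j i with rfl | hj
    · simp [hdiag]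
    · rw [update_of_ne hj]

lemma xHat_update_self (hdiag : ∀ i, A i i = 0) (y : Fin n → Fin q) (i : Fin n) (c : Fin q) :
    xHat A J h (update y i c) i = xHat A J h y i := by
  simp only [xHat_eq_softmax, gam_xVec_update_self hdiag]

lemma pottsH_update (hA : A.IsSymm) (hJ : J.IsSymm) (hdiag : ∀ i, A i i = 0)
    (y : Fin n → Fin q) (i : Fin n) (t : Fin q) :
    pottsH A J h (update y i t) =
      (1 / 2) * ∑ j ∈ univ.erase i, ∑ k ∈ univ.erase i, A j k * J (y j) (y k)
        + ∑ j ∈ univ.erase i, h (y j) + (gam A J (xVec y) i t + h t) := by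
  have hγ : gam A J (xVec y) i t = ∑ k ∈ univ.erase i, A i k * J t (y k) := by
    rw [gam_xVec, ← add_sum_erase _ _ (mem_univ i), hdiag, zero_mul, zero_add]
  have hcol : ∑ j ∈ univ.erase i, A j i * J (y j) t = gam A J (xVec y) i t := by
    rw [hγ]; exact sum_congr rfl fun j _ => by rw [hA.apply j i, hJ.apply]
  have hquad : ∑ j, ∑ k, A j k * J (update y i t j) (update y i t k) =
      ∑ j ∈ univ.erase i, ∑ k ∈ univ.erase i, A j k * J (y j) (y k)
        + 2 * gam A J (xVec y) i t := by
    rw [sum_congr rfl fun j _ =>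
        sum_update_eq_add_sum_erase (fun k a => A j k * J (update y i t j) a) y i t,
      sum_add_distrib, sum_update_eq_add_sum_erase (fun j a => A j i * J a t),
      sum_update_eq_add_sum_erase (fun j a => ∑ k ∈ univ.erase i, A j k * J a (y k)),
      hdiag, hcol, ← hγ]
    ring
  rw [pottsH, hquad, sum_update_eq_add_sum_erase (fun _ a => h a)]
  ring

end Configurations

section Centering

variable {n q : ℕ} [NeZero q] {A : Matrix (Fin n) (Fin n) ℝ} {J : Matrix (Fin q) (Fin q) ℝ}
  {h : Fin q → ℝ}

lemma pottsWeight_update (hA : A.IsSymm) (hJ : J.IsSymm) (hdiag : ∀ i, A i i = 0)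
    (y : Fin n → Fin q) (i : Fin n) (t : Fin q) :
    pottsWeight A J h (update y i t) =
      xHat A J h y i t * ∑ s, pottsWeight A J h (update y i s) := by
  simp only [pottsWeight, pottsH_update hA hJ hdiag, exp_add, xHat, ← sum_div, ← mul_sum]
  field_simp

/-- `x̂_i` is the law of `y_i` given the other spins, so `x_i - x̂_i` is conditionally centred. -/
lemma pottsExpect_resid_mul_eq_zero (hA : A.IsSymm) (hJ : J.IsSymm) (hdiag : ∀ i, A i i = 0)
    (i : Fin n) (r : Fin q) {g : (Fin n → Fin q) → ℝ} (hg : ∀ y t, g (update y i t) = g y) :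
    pottsExpect A J h (fun y => resid A J h y i r * g y) = 0 := by
  have hfiber : ∀ y, ∑ t, pottsWeight A J h (update y i t) *
      (resid A J h (update y i t) i r * g (update y i t)) = 0 := by
    intro y
    have hx : ∀ t, xVec (update y i t) i r = if t = r then 1 else 0 := fun t => by
      simp [xVec]
    rw [sum_congr rfl fun t _ => by rw [pottsWeight_update hA hJ hdiag y i t]]
    simp only [resid, xHat_update_self hdiag, hg, hx]
    calc _ = (∑ s, pottsWeight A J h (update y i s)) * g y *
          ∑ t, ((if t = r then xHat A J h y i t else 0)
            - xHat A J h y i t * xHat A J h y i r) := by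
          rw [mul_sum]
          exact sum_congr rfl fun t _ => by split_ifs <;> ring
      _ = 0 := by
          rw [sum_sub_distrib, sum_ite_eq', if_pos (mem_univ r), ← sum_mul, sum_xHat]
          ring
  have := sum_sum_update (fun y => pottsWeight A J h y * (resid A J h y i r * g y)) i
  simp only [hfiber, sum_const_zero] at this
  exact (smul_eq_zero.1 this.symm).resolve_left (by simp [NeZero.ne q])

end Centering

section Quadratic

variable {n q : ℕ} {A : Matrix (Fin n) (Fin n) ℝ} {J : Matrix (Fin q) (Fin q) ℝ}

lemma Fquad_eq_sum_mul_gam (z : Fin n → Fin q → ℝ) :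
    Fquad A J z = 1 / 2 * ∑ i, ∑ r, z i r * gam A J z i r := by
  simp only [Fquad, gam, mul_sum]
  refine sum_congr rfl fun i _ => ?_
  conv_lhs => rw [sum_comm]; arg 2; ext r; rw [sum_comm]
  exact sum_congr rfl fun r _ => sum_congr rfl fun s _ => sum_congr rfl fun j _ => by ring

lemma sum_mul_gam_comm (hA : A.IsSymm) (hJ : J.IsSymm) (z z' : Fin n → Fin q → ℝ) :
    ∑ i, ∑ r, z i r * gam A J z' i r = ∑ i, ∑ r, z' i r * gam A J z i r := by
  have hexpand : ∀ w w' : Fin n → Fin q → ℝ, ∑ i, ∑ r, w i r * gam A J w' i r =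
      ∑ i, ∑ j, ∑ r, ∑ s, A i j * J r s * w i r * w' j s := fun w w' => by
    simp only [gam, mul_sum]
    refine sum_congr rfl fun i _ => ?_
    conv_rhs => rw [sum_comm]; arg 2; ext r; rw [sum_comm]
    exact sum_congr rfl fun r _ => sum_congr rfl fun s _ => sum_congr rfl fun j _ => by ring
  rw [hexpand, hexpand, sum_comm]
  refine sum_congr rfl fun j _ => sum_congr rfl fun i _ => ?_
  rw [sum_comm]
  refine sum_congr rfl fun s _ => sum_congr rfl fun r _ => ?_
  rw [hA.apply, hJ.apply]
  ring

lemma Fquad_sub_Fquad (hA : A.IsSymm) (hJ : J.IsSymm) (z z' : Fin n → Fin q → ℝ) :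
    Fquad A J z - Fquad A J z' =
      1 / 2 * ∑ i, ∑ r, (z i r - z' i r) * (gam A J z i r + gam A J z' i r) := by
  have := sum_mul_gam_comm hA hJ z z'
  simp only [Fquad_eq_sum_mul_gam, sub_mul, mul_add, sum_add_distrib, sum_sub_distrib]
  linarith

end Quadratic

section SiteQuantities

variable {n q : ℕ} (A : Matrix (Fin n) (Fin n) ℝ) (J : Matrix (Fin q) (Fin q) ℝ)
  (h : Fin q → ℝ)

noncomputable def fieldSum (y : Fin n → Fin q) (i : Fin n) (r : Fin q) : ℝ :=
  gam A J (xVec y) i r + gam A J (xHat A J h y) i r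

noncomputable def siteTerm (y : Fin n → Fin q) (i : Fin n) : ℝ :=
  ∑ r, resid A J h y i r * fieldSum A J h y i r

noncomputable def siteBound (y : Fin n → Fin q) (i : Fin n) : ℝ :=
  ∑ r, (|gam A J (xVec y) i r| + |gam A J (xHat A J h y) i r|)

variable {A J h}

lemma Fquad_xVec_sub_Fquad_xHat (hA : A.IsSymm) (hJ : J.IsSymm) (y : Fin n → Fin q) :
    Fquad A J (xVec y) - Fquad A J (xHat A J h y) = 1 / 2 * ∑ i, siteTerm A J h y i :=
  Fquad_sub_Fquad hA hJ _ _

lemma abs_resid_le_one [NeZero q] (y : Fin n → Fin q) (i : Fin n) (r : Fin q) :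
    |resid A J h y i r| ≤ 1 := by
  obtain ⟨h₀, h₁⟩ := xVec_mem_Icc y i r
  obtain ⟨h₀', h₁'⟩ := xHat_mem_Icc A J h y i r
  exact abs_sub_le_of_nonneg_of_le h₀ h₁ h₀' h₁'

lemma abs_fieldSum_le (y : Fin n → Fin q) (i : Fin n) (r : Fin q) :
    |fieldSum A J h y i r| ≤ |gam A J (xVec y) i r| + |gam A J (xHat A J h y) i r| :=
  abs_add_le _ _

lemma abs_siteTerm_le [NeZero q] (y : Fin n → Fin q) (i : Fin n) :
    |siteTerm A J h y i| ≤ siteBound A J h y i := by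
  refine (abs_sum_le_sum_abs _ _).trans (sum_le_sum fun r _ => ?_)
  rw [abs_mul]
  exact (mul_le_of_le_one_left (abs_nonneg _) (abs_resid_le_one y i r)).trans
    (abs_fieldSum_le y i r)

lemma siteBound_nonneg (y : Fin n → Fin q) (i : Fin n) : 0 ≤ siteBound A J h y i := by
  unfold siteBound; positivity

lemma sum_abs_gam_le (z : Fin n → Fin q → ℝ) (i : Fin n) :
    ∑ r, |gam A J z i r| ≤ ∑ r, ∑ s, |J r s| * |∑ j, A i j * z j s| :=
  sum_le_sum fun _ _ => (abs_sum_le_sum_abs _ _).trans_eq (sum_congr rfl fun _ _ => abs_mul _ _)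

lemma sum_abs_gam_le_of_mem_Icc {z : Fin n → Fin q → ℝ} (hz : ∀ j s, z j s ∈ Set.Icc 0 1)
    (i : Fin n) : ∑ r, |gam A J z i r| ≤ absSum J * (n * maxAbsEntry A) := by
  have hrow : ∀ s, |∑ j, A i j * z j s| ≤ n * maxAbsEntry A := fun s =>
    calc |∑ j, A i j * z j s| ≤ ∑ _j : Fin n, maxAbsEntry A :=
          (abs_sum_le_sum_abs _ _).trans <| sum_le_sum fun j _ => by
            rw [abs_mul, abs_of_nonneg (hz j s).1]
            exact mul_le_of_le_one_right (abs_nonneg _) (hz j s).2 |>.trans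
              (abs_le_maxAbsEntry i j)
      _ = n * maxAbsEntry A := by simp
  refine (sum_abs_gam_le z i).trans ?_
  rw [absSum, sum_mul]
  exact sum_le_sum fun r _ => by
    rw [sum_mul]; exact sum_le_sum fun s _ => by gcongr; exact hrow s

lemma sum_sum_abs_gam_le_of_mem_Icc {z : Fin n → Fin q → ℝ}
    (hz : ∀ j s, z j s ∈ Set.Icc 0 1) {B : ℝ} (hB : MeanFieldBound A B) :
    ∑ i, ∑ r, |gam A J z i r| ≤ absSum J * B := by
  calc ∑ i, ∑ r, |gam A J z i r| ≤ ∑ i, ∑ r, ∑ s, |J r s| * |∑ j, A i j * z j s| :=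
        sum_le_sum fun i _ => sum_abs_gam_le z i
    _ = ∑ r, ∑ s, |J r s| * ∑ i, |∑ j, A i j * z j s| := by
        rw [sum_comm]; simp only [mul_sum]; exact sum_congr rfl fun r _ => sum_comm
    _ ≤ ∑ r, ∑ s, |J r s| * B :=
        sum_le_sum fun r _ => sum_le_sum fun s _ => by gcongr; exact hB _ fun j => hz j s
    _ = absSum J * B := by rw [absSum, sum_mul]; simp only [sum_mul]

lemma siteBound_le [NeZero q] (y : Fin n → Fin q) (i : Fin n) :
    siteBound A J h y i ≤ 2 * absSum J * (n * maxAbsEntry A) := by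
  rw [siteBound, sum_add_distrib]
  linarith [sum_abs_gam_le_of_mem_Icc (A := A) (J := J) (xVec_mem_Icc y) i,
    sum_abs_gam_le_of_mem_Icc (A := A) (J := J) (xHat_mem_Icc A J h y) i]

lemma sum_siteBound_le [NeZero q] {B : ℝ} (hB : MeanFieldBound A B) (y : Fin n → Fin q) :
    ∑ i, siteBound A J h y i ≤ 2 * absSum J * B := by
  simp only [siteBound, sum_add_distrib]
  linarith [sum_sum_abs_gam_le_of_mem_Icc (J := J) (xVec_mem_Icc y) hB,
    sum_sum_abs_gam_le_of_mem_Icc (J := J) (xHat_mem_Icc A J h y) hB]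

end SiteQuantities

section SpinFlip

variable {n q : ℕ} {A : Matrix (Fin n) (Fin n) ℝ} {J : Matrix (Fin q) (Fin q) ℝ}
  {h : Fin q → ℝ}

lemma abs_gam_sub_le {z z' : Fin n → Fin q → ℝ} {d : Fin n → ℝ}
    (hd : ∀ j s, |z j s - z' j s| ≤ d j) (k : Fin n) (r : Fin q) :
    |gam A J z k r - gam A J z' k r| ≤ absSum J * ∑ j, |A k j| * d j := by
  have hd0 : ∀ j, 0 ≤ d j := fun j => (abs_nonneg _).trans (hd j r)
  have hinner : ∀ s, |∑ j, A k j * (z j s - z' j s)| ≤ ∑ j, |A k j| * d j := fun s =>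
    (abs_sum_le_sum_abs _ _).trans <| sum_le_sum fun j _ => by
      rw [abs_mul]; exact mul_le_mul_of_nonneg_left (hd j s) (abs_nonneg _)
  calc |gam A J z k r - gam A J z' k r| = |∑ s, J r s * ∑ j, A k j * (z j s - z' j s)| := by
        simp only [gam, ← sum_sub_distrib, ← mul_sub]
    _ ≤ ∑ s, |J r s| * ∑ j, |A k j| * d j :=
        (abs_sum_le_sum_abs _ _).trans <| sum_le_sum fun s _ => by
          rw [abs_mul]; exact mul_le_mul_of_nonneg_left (hinner s) (abs_nonneg _)
    _ ≤ absSum J * ∑ j, |A k j| * d j := by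
        rw [← sum_mul]
        exact mul_le_mul_of_nonneg_right (sum_abs_le_absSum r)
          (sum_nonneg fun j _ => mul_nonneg (abs_nonneg _) (hd0 j))

lemma abs_gam_xVec_update_sub_le (y : Fin n → Fin q) (i : Fin n) (c : Fin q) (k : Fin n)
    (r : Fin q) :
    |gam A J (xVec (update y i c)) k r - gam A J (xVec y) k r| ≤ absSum J * |A k i| := by
  have hd : ∀ j s, |xVec (update y i c) j s - xVec y j s| ≤ if j = i then 1 else 0 := by
    intro j s
    split_ifs with hj
    · obtain ⟨h₀, h₁⟩ := xVec_mem_Icc (update y i c) j s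
      obtain ⟨h₀', h₁'⟩ := xVec_mem_Icc y j s
      exact abs_sub_le_of_nonneg_of_le h₀ h₁ h₀' h₁'
    · simp [xVec, update_of_ne hj]
  simpa using abs_gam_sub_le (A := A) (J := J) hd k r

lemma abs_xHat_update_sub_le [NeZero q] (hside : 2 * absSum J * maxAbsEntry A ≤ 1)
    (y : Fin n → Fin q) (i : Fin n) (c : Fin q) (j : Fin n) (s : Fin q) :
    |xHat A J h (update y i c) j s - xHat A J h y j s| ≤ 4 * absSum J * |A j i| := by
  rw [xHat_eq_softmax, xHat_eq_softmax, mul_assoc]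
  refine abs_softmax_sub_softmax_le _ ?_ (fun t => ?_) s
  · calc 2 * (absSum J * |A j i|) ≤ 2 * absSum J * maxAbsEntry A := by
          rw [← mul_assoc]; gcongr
          · exact mul_nonneg zero_le_two (absSum_nonneg J)
          · exact abs_le_maxAbsEntry j i
      _ ≤ 1 := hside
  · simpa using abs_gam_xVec_update_sub_le y i c j t

lemma abs_gam_xHat_update_sub_le [NeZero q] (hside : 2 * absSum J * maxAbsEntry A ≤ 1)
    (y : Fin n → Fin q) (i : Fin n) (c : Fin q) (k : Fin n) (r : Fin q) :
    |gam A J (xHat A J h (update y i c)) k r - gam A J (xHat A J h y) k r| ≤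
      4 * absSum J ^ 2 * absMulAbs A k i :=
  (abs_gam_sub_le (abs_xHat_update_sub_le hside y i c) k r).trans_eq <| by
    rw [absMulAbs, mul_sum, mul_sum]; exact sum_congr rfl fun j _ => by ring

lemma abs_fieldSum_update_sub_le [NeZero q] (hside : 2 * absSum J * maxAbsEntry A ≤ 1)
    (y : Fin n → Fin q) (i : Fin n) (c : Fin q) (k : Fin n) (r : Fin q) :
    |fieldSum A J h (update y i c) k r - fieldSum A J h y k r| ≤
      absSum J * |A k i| + 4 * absSum J ^ 2 * absMulAbs A k i := by
  rw [fieldSum, fieldSum, add_sub_add_comm]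
  exact (abs_add_le _ _).trans (add_le_add (abs_gam_xVec_update_sub_le y i c k r)
    (abs_gam_xHat_update_sub_le hside y i c k r))

lemma abs_siteTerm_update_sub_le [NeZero q] (hside : 2 * absSum J * maxAbsEntry A ≤ 1)
    (y : Fin n → Fin q) (i : Fin n) (c : Fin q) {k : Fin n} (hki : k ≠ i) :
    |siteTerm A J h (update y i c) k - siteTerm A J h y k| ≤
      4 * absSum J * |A k i| * siteBound A J h (update y i c) k
        + q * (absSum J * |A k i| + 4 * absSum J ^ 2 * absMulAbs A k i) := by
  set y' := update y i c
  have hresid : ∀ r, |resid A J h y' k r - resid A J h y k r| ≤ 4 * absSum J * |A k i| := by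
    intro r
    rw [resid, resid, show xVec y' k r = xVec y k r by simp [y', xVec, update_of_ne hki],
      sub_sub_sub_cancel_left, abs_sub_comm]
    exact abs_xHat_update_sub_le hside y i c k r
  have hterm : ∀ r, |resid A J h y' k r * fieldSum A J h y' k r -
      resid A J h y k r * fieldSum A J h y k r| ≤
      4 * absSum J * |A k i| * (|gam A J (xVec y') k r| + |gam A J (xHat A J h y') k r|)
        + (absSum J * |A k i| + 4 * absSum J ^ 2 * absMulAbs A k i) := by
    intro r
    rw [show resid A J h y' k r * fieldSum A J h y' k r - resid A J h y k r * fieldSum A J h y k r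
      = (resid A J h y' k r - resid A J h y k r) * fieldSum A J h y' k r
        + resid A J h y k r * (fieldSum A J h y' k r - fieldSum A J h y k r) by ring]
    refine (abs_add_le _ _).trans (add_le_add ?_ ?_) <;> rw [abs_mul]
    · exact mul_le_mul (hresid r) (abs_fieldSum_le y' k r) (abs_nonneg _)
        (by have := absSum_nonneg J; positivity)
    · exact mul_le_of_le_one_left (abs_nonneg _) (abs_resid_le_one y k r) |>.trans
        (abs_fieldSum_update_sub_le hside y i c k r)
  rw [siteTerm, siteTerm, ← sum_sub_distrib]
  refine (abs_sum_le_sum_abs _ _).trans ((sum_le_sum fun r _ => hterm r).trans_eq ?_)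
  rw [sum_add_distrib, ← mul_sum, siteBound, sum_const, card_univ, Fintype.card_fin,
    nsmul_eq_mul]

end SpinFlip

section Correlations

variable {n q : ℕ} [NeZero q] (A : Matrix (Fin n) (Fin n) ℝ) (J : Matrix (Fin q) (Fin q) ℝ)
  (h : Fin q → ℝ)

/-- Up to a term `4 q (absSum J)² (|A||A|)_ki m_i`, the error made in `E[u_i u_k]` by evaluating
`(γ_ir(x) + γ_ir(x̂)) u_k` at `update y i 0` instead of at `y`. -/
noncomputable def crossRemainder (y : Fin n → Fin q) (i k : Fin n) : ℝ :=
  4 * q * absSum J ^ 2 * absMulAbs A i i * siteBound A J h (update y i 0) k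
    + 4 * absSum J * |A k i| * siteBound A J h y i * siteBound A J h y k
    + q * absSum J * |A k i| * siteBound A J h y i

lemma crossRemainder_nonneg (y : Fin n → Fin q) (i k : Fin n) :
    0 ≤ crossRemainder A J h y i k := by
  have := absSum_nonneg J
  have := absMulAbs_nonneg A i i
  have := siteBound_nonneg (A := A) (J := J) (h := h) y i
  have := siteBound_nonneg (A := A) (J := J) (h := h) y k
  have := siteBound_nonneg (A := A) (J := J) (h := h) (update y i 0) k
  unfold crossRemainder; positivity

variable {A J h}

lemma sum_abs_resid_mul_sub_le (hdiag : ∀ i, A i i = 0)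
    (hside : 2 * absSum J * maxAbsEntry A ≤ 1) (y : Fin n → Fin q) {i k : Fin n}
    (hki : k ≠ i) :
    ∑ r, |resid A J h y i r * (fieldSum A J h y i r * siteTerm A J h y k
        - fieldSum A J h (update y i 0) i r * siteTerm A J h (update y i 0) k)| ≤
      crossRemainder A J h y i k
        + 4 * q * absSum J ^ 2 * absMulAbs A k i * siteBound A J h y i := by
  set y₀ := update y i 0
  have hy : update y₀ i (y i) = y := by simp [y₀]
  have hfield : ∀ r, |fieldSum A J h y i r - fieldSum A J h y₀ i r| ≤
      4 * absSum J ^ 2 * absMulAbs A i i := fun r => by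
    simpa [hy, hdiag] using abs_fieldSum_update_sub_le (h := h) hside y₀ i (y i) i r
  have hsite : |siteTerm A J h y k - siteTerm A J h y₀ k| ≤
      4 * absSum J * |A k i| * siteBound A J h y k
        + q * (absSum J * |A k i| + 4 * absSum J ^ 2 * absMulAbs A k i) := by
    simpa [hy] using abs_siteTerm_update_sub_le (h := h) hside y₀ i (y i) hki
  have hterm : ∀ r, |resid A J h y i r * (fieldSum A J h y i r * siteTerm A J h y k
      - fieldSum A J h y₀ i r * siteTerm A J h y₀ k)| ≤
      4 * absSum J ^ 2 * absMulAbs A i i * siteBound A J h y₀ k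
        + (|gam A J (xVec y) i r| + |gam A J (xHat A J h y) i r|) *
          (4 * absSum J * |A k i| * siteBound A J h y k
            + q * (absSum J * |A k i| + 4 * absSum J ^ 2 * absMulAbs A k i)) := by
    intro r
    rw [abs_mul]
    refine (mul_le_of_le_one_left (abs_nonneg _) (abs_resid_le_one y i r)).trans ?_
    rw [show fieldSum A J h y i r * siteTerm A J h y k
        - fieldSum A J h y₀ i r * siteTerm A J h y₀ k
      = (fieldSum A J h y i r - fieldSum A J h y₀ i r) * siteTerm A J h y₀ k
        + fieldSum A J h y i r * (siteTerm A J h y k - siteTerm A J h y₀ k) by ring]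
    refine (abs_add_le _ _).trans (add_le_add ?_ ?_) <;> rw [abs_mul]
    · exact mul_le_mul (hfield r) (abs_siteTerm_le y₀ k) (abs_nonneg _)
        (by have := absMulAbs_nonneg A i i; positivity)
    · exact mul_le_mul (abs_fieldSum_le y i r) hsite (abs_nonneg _) (by positivity)
  refine (sum_le_sum fun r _ => hterm r).trans_eq ?_
  rw [sum_add_distrib, sum_const, card_univ, Fintype.card_fin, nsmul_eq_mul, ← sum_mul]
  change _ + siteBound A J h y i * _ = _
  rw [crossRemainder]
  ring

lemma abs_pottsExpect_siteTerm_mul_siteTerm_le (hA : A.IsSymm) (hJ : J.IsSymm)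
    (hdiag : ∀ i, A i i = 0) (hside : 2 * absSum J * maxAbsEntry A ≤ 1) {i k : Fin n}
    (hki : k ≠ i) :
    |pottsExpect A J h fun y => siteTerm A J h y i * siteTerm A J h y k| ≤
      pottsExpect A J h (fun y => crossRemainder A J h y i k)
        + 4 * q * absSum J ^ 2 * absMulAbs A k i * pottsExpect A J h (siteBound A J h · i) := by
  set f : Fin q → (Fin n → Fin q) → ℝ := fun r y => resid A J h y i r *
    (fieldSum A J h y i r * siteTerm A J h y k
      - fieldSum A J h (update y i 0) i r * siteTerm A J h (update y i 0) k)
  have hcentred : ∀ r, pottsExpect A J h (fun y => resid A J h y i r *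
      (fieldSum A J h (update y i 0) i r * siteTerm A J h (update y i 0) k)) = 0 :=
    fun r => pottsExpect_resid_mul_eq_zero hA hJ hdiag i r fun y t => by rw [update_idem]
  have hexpand : (pottsExpect A J h fun y => siteTerm A J h y i * siteTerm A J h y k) =
      ∑ r, pottsExpect A J h (f r) := by
    calc (pottsExpect A J h fun y => siteTerm A J h y i * siteTerm A J h y k)
        = ∑ r, pottsExpect A J h (fun y => resid A J h y i r *
            (fieldSum A J h y i r * siteTerm A J h y k)) := by
          rw [← pottsExpect_sum]
          congr 1; funext y
          change (∑ r, resid A J h y i r * fieldSum A J h y i r) * siteTerm A J h y k = _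
          simp only [sum_mul, mul_assoc]
      _ = ∑ r, (pottsExpect A J h (f r) + pottsExpect A J h (fun y => resid A J h y i r *
            (fieldSum A J h (update y i 0) i r * siteTerm A J h (update y i 0) k))) :=
          sum_congr rfl fun r _ => by
            rw [← pottsExpect_add]; congr 1; funext y; simp only [f]; ring
      _ = ∑ r, pottsExpect A J h (f r) := by simp only [hcentred, add_zero]
  rw [hexpand, ← pottsExpect_const_mul, ← pottsExpect_add]
  refine (abs_sum_le_sum_abs _ _).trans <| (sum_le_sum fun r _ => abs_pottsExpect_le (f r)).trans ?_
  rw [← pottsExpect_sum]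
  exact pottsExpect_mono fun y => sum_abs_resid_mul_sub_le hdiag hside y hki

end Correlations

lemma le_add_add_mul_sqrt_mul_sqrt {x a b c u v : ℝ} (ha : 0 ≤ a) (hb : 0 ≤ b) (hc : 0 ≤ c)
    (hu : 0 ≤ u) (hv : 0 ≤ v) (hxu : x ≤ a + c * u) (hxv : x ≤ b + c * v) :
    x ≤ a + b + c * (√u * √v) := by
  rcases le_total u v with huv | hvu
  · have : u ≤ √u * √v := by
      calc u = √u * √u := (mul_self_sqrt hu).symm
        _ ≤ √u * √v := by gcongr
    nlinarith [mul_le_mul_of_nonneg_left this hc]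
  · have : v ≤ √u * √v := by
      calc v = √v * √v := (mul_self_sqrt hv).symm
        _ ≤ √u * √v := by gcongr
    nlinarith [mul_le_mul_of_nonneg_left this hc]

section Assembly

variable {n q : ℕ} [NeZero q] {A : Matrix (Fin n) (Fin n) ℝ} {J : Matrix (Fin q) (Fin q) ℝ}
  {h : Fin q → ℝ}

lemma sum_sum_crossRemainder_le (hA : A.IsSymm) {S : ℝ}
    (hS : ∀ y, ∑ i, siteBound A J h y i ≤ S) (y : Fin n → Fin q) :
    ∑ i, ∑ k, crossRemainder A J h y i k ≤
      4 * q * absSum J ^ 2 * (A * A).trace * S + 4 * absSum J * maxAbsEntry A * S ^ 2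
        + q * absSum J * (n * maxAbsEntry A) * S := by
  have hK := absSum_nonneg J
  have hα := maxAbsEntry_nonneg A
  have hm := siteBound_nonneg (A := A) (J := J) (h := h)
  have hS0 : 0 ≤ ∑ i, siteBound A J h y i := sum_nonneg fun i _ => hm y i
  have h₁ : ∑ i, ∑ k,
        4 * q * absSum J ^ 2 * absMulAbs A i i * siteBound A J h (update y i 0) k ≤
      4 * q * absSum J ^ 2 * (A * A).trace * S := by
    simp only [← mul_sum]
    rw [trace_mul_self_eq_sum_absMulAbs hA, mul_sum, sum_mul]
    exact sum_le_sum fun i _ => by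
      have := absMulAbs_nonneg A i i
      gcongr; exact hS _
  have h₂ : ∑ i, ∑ k, 4 * absSum J * |A k i| * siteBound A J h y i * siteBound A J h y k
      ≤ 4 * absSum J * maxAbsEntry A * S ^ 2 :=
    calc _ ≤ ∑ i, ∑ k,
          4 * absSum J * maxAbsEntry A * siteBound A J h y i * siteBound A J h y k :=
          sum_le_sum fun i _ => sum_le_sum fun k _ => by
            have := hm y i; have := hm y k
            gcongr; exact abs_le_maxAbsEntry k i
      _ = 4 * absSum J * maxAbsEntry A * (∑ i, siteBound A J h y i) ^ 2 := by
          rw [sq, sum_mul_sum, mul_sum]; simp only [mul_sum, mul_assoc]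
      _ ≤ _ := by gcongr; exact hS y
  have h₃ : ∑ i, ∑ k, q * absSum J * |A k i| * siteBound A J h y i
      ≤ q * absSum J * (n * maxAbsEntry A) * S :=
    calc _ = ∑ i, q * absSum J * (∑ k, |A k i|) * siteBound A J h y i := by
          simp only [mul_sum, sum_mul]
      _ ≤ ∑ i, q * absSum J * (n * maxAbsEntry A) * siteBound A J h y i :=
          sum_le_sum fun i _ => by
            have := hm y i; gcongr; simpa using sum_abs_le_card_mul_maxAbsEntry (A := A) i
      _ ≤ _ := by rw [← mul_sum]; gcongr; exact hS y
  simp only [crossRemainder, sum_add_distrib]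
  linarith

lemma pottsExpect_siteTerm_mul_self_le (i : Fin n) :
    (pottsExpect A J h fun y => siteTerm A J h y i * siteTerm A J h y i) ≤
      2 * absSum J * (n * maxAbsEntry A) * pottsExpect A J h (siteBound A J h · i) := by
  rw [← pottsExpect_const_mul]
  refine pottsExpect_mono fun y => ?_
  have hu := abs_siteTerm_le (A := A) (J := J) (h := h) y i
  calc siteTerm A J h y i * siteTerm A J h y i = |siteTerm A J h y i| * |siteTerm A J h y i| :=
        (abs_mul_abs_self _).symm
    _ ≤ siteBound A J h y i * siteBound A J h y i := mul_self_le_mul_self (abs_nonneg _) hu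
    _ ≤ 2 * absSum J * (n * maxAbsEntry A) * siteBound A J h y i :=
        mul_le_mul_of_nonneg_right (siteBound_le y i) (siteBound_nonneg y i)

/-- The two one-sided bounds of `abs_pottsExpect_siteTerm_mul_siteTerm_le` are combined through
`min a b ≤ √a √b`, which makes the `absMulAbs` term amenable to Cauchy–Schwarz. -/
lemma abs_pottsExpect_siteTerm_mul_siteTerm_le_sqrt (hA : A.IsSymm) (hJ : J.IsSymm)
    (hdiag : ∀ i, A i i = 0) (hside : 2 * absSum J * maxAbsEntry A ≤ 1) {i k : Fin n}
    (hki : k ≠ i) :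
    |pottsExpect A J h fun y => siteTerm A J h y i * siteTerm A J h y k| ≤
      pottsExpect A J h (fun y => crossRemainder A J h y i k)
        + pottsExpect A J h (fun y => crossRemainder A J h y k i)
        + 4 * q * absSum J ^ 2 * absMulAbs A i k *
          (√(pottsExpect A J h (siteBound A J h · i)) *
            √(pottsExpect A J h (siteBound A J h · k))) := by
  have hswap : (pottsExpect A J h fun y => siteTerm A J h y i * siteTerm A J h y k) =
      pottsExpect A J h fun y => siteTerm A J h y k * siteTerm A J h y i := by
    simp only [mul_comm (siteTerm A J h _ i)]
  have hik := abs_pottsExpect_siteTerm_mul_siteTerm_le (h := h) hA hJ hdiag hside hki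
  have hki' := abs_pottsExpect_siteTerm_mul_siteTerm_le (h := h) hA hJ hdiag hside hki.symm
  rw [absMulAbs_comm hA k i] at hik
  rw [← hswap] at hki'
  have := absMulAbs_nonneg A i k
  exact le_add_add_mul_sqrt_mul_sqrt (pottsExpect_nonneg fun y => crossRemainder_nonneg A J h y i k)
    (pottsExpect_nonneg fun y => crossRemainder_nonneg A J h y k i) (by positivity)
    (pottsExpect_nonneg fun y => siteBound_nonneg y i)
    (pottsExpect_nonneg fun y => siteBound_nonneg y k) hik hki'

lemma sum_pottsExpect_siteTerm_mul_siteTerm_le (hA : A.IsSymm) (hJ : J.IsSymm)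
    (hdiag : ∀ i, A i i = 0) (hside : 2 * absSum J * maxAbsEntry A ≤ 1) (i : Fin n) :
    ∑ k, (pottsExpect A J h fun y => siteTerm A J h y i * siteTerm A J h y k) ≤
      2 * absSum J * (n * maxAbsEntry A) * pottsExpect A J h (siteBound A J h · i)
        + ∑ k, (pottsExpect A J h (fun y => crossRemainder A J h y i k)
          + pottsExpect A J h (fun y => crossRemainder A J h y k i)
          + 4 * q * absSum J ^ 2 * absMulAbs A i k *
            (√(pottsExpect A J h (siteBound A J h · i)) *
              √(pottsExpect A J h (siteBound A J h · k)))) := by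
  rw [← add_sum_erase _ _ (mem_univ i)]
  refine add_le_add (pottsExpect_siteTerm_mul_self_le i) ?_
  refine (sum_le_sum fun k hk => (le_abs_self _).trans
    (abs_pottsExpect_siteTerm_mul_siteTerm_le_sqrt hA hJ hdiag hside (ne_of_mem_erase hk))).trans
    (sum_le_sum_of_subset_of_nonneg (erase_subset i univ) fun k _ _ => ?_)
  have := absMulAbs_nonneg A i k
  have := pottsExpect_nonneg (A := A) (J := J) (h := h) fun y => crossRemainder_nonneg A J h y i k
  have := pottsExpect_nonneg (A := A) (J := J) (h := h) fun y => crossRemainder_nonneg A J h y k i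
  positivity

lemma pottsExpect_sq_sum_siteTerm_le (hA : A.IsSymm) (hJ : J.IsSymm) (hdiag : ∀ i, A i i = 0)
    (hside : 2 * absSum J * maxAbsEntry A ≤ 1) {S : ℝ}
    (hS : ∀ y, ∑ i, siteBound A J h y i ≤ S) :
    (pottsExpect A J h fun y => (∑ i, siteTerm A J h y i) ^ 2) ≤
      2 * (1 + q) * absSum J * (n * maxAbsEntry A) * S
        + 12 * q * absSum J ^ 2 * (A * A).trace * S + 8 * absSum J * maxAbsEntry A * S ^ 2 := by
  set e : Fin n → ℝ := fun i => pottsExpect A J h (siteBound A J h · i)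
  set c := 4 * q * absSum J ^ 2
  set R : Fin n → Fin n → ℝ := fun i k =>
    pottsExpect A J h fun y => crossRemainder A J h y i k
  have he0 : ∀ i, 0 ≤ e i := fun i => pottsExpect_nonneg fun y => siteBound_nonneg y i
  have he : ∑ i, e i ≤ S := by
    simp only [e, ← pottsExpect_sum]; exact pottsExpect_le_of_le hS
  have hR : ∑ i, ∑ k, R i k ≤ 4 * q * absSum J ^ 2 * (A * A).trace * S
      + 4 * absSum J * maxAbsEntry A * S ^ 2 + q * absSum J * (n * maxAbsEntry A) * S := by
    simpa only [pottsExpect_sum] using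
      pottsExpect_le_of_le (A := A) (J := J) (h := h) (sum_sum_crossRemainder_le hA hS)
  have hT : 0 ≤ (A * A).trace := by
    rw [trace_mul_self_eq_sum_absMulAbs hA]; exact sum_nonneg fun i _ => absMulAbs_nonneg A i i
  have hcs :
      ∑ i, ∑ k, c * absMulAbs A i k * (√(e i) * √(e k)) ≤ c * (A * A).trace * S := by
    have := sum_sum_mul_mul_absMulAbs_le hA fun i => √(e i)
    simp only [sq_sqrt (he0 _)] at this
    calc _ = c * ∑ i, ∑ k, √(e i) * √(e k) * absMulAbs A i k := by
          simp only [mul_sum]; exact sum_congr rfl fun i _ => sum_congr rfl fun k _ => by ring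
      _ ≤ c * ((A * A).trace * S) := by gcongr; exact this.trans (by gcongr)
      _ = _ := by ring
  have hdiagS : 2 * absSum J * (n * maxAbsEntry A) * ∑ i, e i ≤
      2 * absSum J * (n * maxAbsEntry A) * S := by
    have := absSum_nonneg J; have := maxAbsEntry_nonneg A; gcongr
  calc (pottsExpect A J h fun y => (∑ i, siteTerm A J h y i) ^ 2)
      = ∑ i, ∑ k, pottsExpect A J h fun y => siteTerm A J h y i * siteTerm A J h y k := by
        simp only [sq, sum_mul_sum, pottsExpect_sum]
    _ ≤ ∑ i, (2 * absSum J * (n * maxAbsEntry A) * e i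
          + ∑ k, (R i k + R k i + c * absMulAbs A i k * (√(e i) * √(e k)))) :=
        sum_le_sum fun i _ => sum_pottsExpect_siteTerm_mul_siteTerm_le hA hJ hdiag hside i
    _ = 2 * absSum J * (n * maxAbsEntry A) * ∑ i, e i + 2 * ∑ i, ∑ k, R i k
          + ∑ i, ∑ k, c * absMulAbs A i k * (√(e i) * √(e k)) := by
        simp only [sum_add_distrib, ← mul_sum]
        rw [sum_comm (f := fun i k => R k i)]
        ring
    _ ≤ _ := by linarith

lemma pottsExpect_sq_Fquad_sub_le (hA : A.IsSymm) (hJ : J.IsSymm) (hdiag : ∀ i, A i i = 0)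
    (hside : 2 * absSum J * maxAbsEntry A ≤ 1) {C : ℝ} (hC : MeanFieldBound A (C * n)) :
    (pottsExpect A J h fun y => (Fquad A J (xVec y) - Fquad A J (xHat A J h y)) ^ 2) ≤
      absSum J ^ 2 * C * (1 + q + 8 * absSum J * C) * (n ^ 2 * maxAbsEntry A)
        + 6 * q * absSum J ^ 3 * C * (n * (A * A).trace) := by
  calc (pottsExpect A J h fun y => (Fquad A J (xVec y) - Fquad A J (xHat A J h y)) ^ 2)
      = 1 / 4 * pottsExpect A J h fun y => (∑ i, siteTerm A J h y i) ^ 2 := by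
        rw [← pottsExpect_const_mul]
        congr 1; funext y
        rw [Fquad_xVec_sub_Fquad_xHat hA hJ]; ring
    _ ≤ 1 / 4 * (2 * (1 + q) * absSum J * (n * maxAbsEntry A) * (2 * absSum J * (C * n))
          + 12 * q * absSum J ^ 2 * (A * A).trace * (2 * absSum J * (C * n))
          + 8 * absSum J * maxAbsEntry A * (2 * absSum J * (C * n)) ^ 2) := by
        gcongr; exact pottsExpect_sq_sum_siteTerm_le hA hJ hdiag hside (sum_siteBound_le hC)
    _ = _ := by ring

end Assembly

end Potts

theorem lemma_F_close
    (q : ℕ) (hq : 2 ≤ q) (J : Matrix (Fin q) (Fin q) ℝ) (hJ : J.IsSymm) (h : Fin q → ℝ)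
    (A : (n : ℕ) → Matrix (Fin n) (Fin n) ℝ) (hsymm : ∀ n, (A n).IsSymm)
    (hMF : meanFieldAssumption A)
    (hdiag : ∀ n : ℕ, ∀ i : Fin n, A n i i = 0)
    (hmax : Tendsto (fun n : ℕ => ⨆ i : Fin n, ⨆ j : Fin n, |A n i j|) atTop (nhds 0)) :
    Tendsto
      (fun n : ℕ =>
        (∑ y : Fin n → Fin q, pottsWeight (A n) J h y *
          (Fquad (A n) J (xVec y) - Fquad (A n) J (xHat (A n) J h y)) ^ 2) / (n : ℝ) ^ 2)
      atTop (nhds 0) := by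
  have : NeZero q := ⟨by omega⟩
  obtain ⟨⟨C, hC⟩, htrace⟩ := hMF
  set K := Potts.absSum J
  set a := K ^ 2 * C * (1 + q + 8 * K * C) with ha
  set b := 6 * q * K ^ 3 * C with hb
  have hlim : Tendsto (fun n : ℕ => a * Potts.maxAbsEntry (A n) + b * ((A n * A n).trace / n))
      atTop (nhds 0) := by
    have := (hmax.const_mul a).add (htrace.const_mul b)
    rwa [mul_zero, mul_zero, add_zero] at this
  have hside : ∀ᶠ n : ℕ in atTop, 2 * K * Potts.maxAbsEntry (A n) < 1 :=
    (hmax.const_mul (2 * K)).eventually_lt_const (by simp)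
  refine squeeze_zero' (Eventually.of_forall fun n => div_nonneg
    (Potts.pottsExpect_nonneg fun y => sq_nonneg _) (sq_nonneg _)) ?_ hlim
  filter_upwards [hside, eventually_ge_atTop 1] with n hn hn1
  have hn0 : (0 : ℝ) < n := by exact_mod_cast hn1
  rw [div_le_iff₀ (by positivity)]
  refine (Potts.pottsExpect_sq_Fquad_sub_le (hsymm n) hJ (hdiag n) hn.le (hC n)).trans_eq ?_
  field_simp
  rw [ha, hb]
  ring
end

section
/- Let (A_n) be a sequence of symmetric real n×n matrices satisfying the mean-field assumption, with A_n(i,i) = 0 for all i and max_{i,j∈[n]} |A_n(i,j)| → 0 as n → ∞. Let Y be a random element of {1,…,q}^n with law μ_n, and let X and X̂ be as defined in the context. Then (1/n²)·E_{μ_n}[ Σ_{r=1}^q ( Σ_{i=1}^n (X_{ir} − X̂_{ir}) )² ] → 0 as n → ∞. -/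
open Finset Filter Real

/-!
Write `Δ_{ir} = X_{ir} - X̂_{ir}`. As `A` is symmetric with zero diagonal and `J` is symmetric,
`H(y)` depends on the spin `y_i` only through `γ_{i,y_i} + h(y_i)`, so `X̂_{i·}` is the
conditional law of `Y_i` given the other spins, so `Δ_{ir}` is orthogonal to every function of the
other spins. For `j ≠ i`, the cavity version of `X̂_{jr}` (the softmax of the field at `j` with the
spin at `i` removed) is such a function, and it differs from `X̂_{jr}` by at most `e^{2εM} - 1`,
where `ε = max |A(i,j)|` and `M = max |J(r,s)|`. Hence `E[Δ_{ir} Δ_{jr}] ≤ e^{2εM} - 1` off the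
diagonal, the diagonal terms are at most `1`, and
`E Σ_r (Σ_i Δ_{ir})² ≤ q (n + n² (e^{2εM} - 1)) = o(n²)`.
-/
noncomputable def softmax {ι : Type*} [Fintype ι] (a : ι → ℝ) (r : ι) : ℝ :=
  exp (a r) / ∑ s, exp (a s)

section Softmax

variable {ι : Type*} [Fintype ι]

lemma sum_exp_pos [Nonempty ι] (a : ι → ℝ) : 0 < ∑ s, exp (a s) :=
  Finset.sum_pos (fun _ _ => exp_pos _) univ_nonempty

lemma softmax_nonneg (a : ι → ℝ) (r : ι) : 0 ≤ softmax a r :=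
  div_nonneg (exp_pos _).le (Finset.sum_nonneg fun _ _ => (exp_pos _).le)

lemma softmax_le_one (a : ι → ℝ) (r : ι) : softmax a r ≤ 1 := by
  have : Nonempty ι := ⟨r⟩
  rw [softmax, div_le_one (sum_exp_pos a)]
  exact Finset.single_le_sum (fun s _ => (exp_pos (a s)).le) (mem_univ r)

lemma softmax_mul_sum_exp (a : ι → ℝ) (r : ι) :
    softmax a r * ∑ s, exp (a s) = exp (a r) :=
  have : Nonempty ι := ⟨r⟩
  div_mul_cancel₀ _ (sum_exp_pos a).ne'

lemma softmax_le_exp_mul_softmax {a b : ι → ℝ} {δ : ℝ} (hab : ∀ s, |a s - b s| ≤ δ) (r : ι) :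
    softmax b r ≤ exp (2 * δ) * softmax a r := by
  have : Nonempty ι := ⟨r⟩
  have hnum : exp (b r) ≤ exp δ * exp (a r) := by
    rw [← exp_add]
    exact exp_le_exp.mpr (by linarith [(abs_le.mp (hab r)).1])
  have hden : exp (-δ) * ∑ s, exp (a s) ≤ ∑ s, exp (b s) := by
    rw [Finset.mul_sum]
    refine Finset.sum_le_sum fun s _ => ?_
    rw [← exp_add]
    exact exp_le_exp.mpr (by linarith [(abs_le.mp (hab s)).2])
  calc softmax b r ≤ exp δ * exp (a r) / (exp (-δ) * ∑ s, exp (a s)) :=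
        div_le_div₀ (by positivity) hnum (by have := sum_exp_pos a; positivity) hden
    _ = exp (2 * δ) * softmax a r := by
        rw [softmax, mul_div_mul_comm, ← exp_sub]
        ring_nf

lemma abs_softmax_sub_softmax_le {a b : ι → ℝ} {δ : ℝ} (hab : ∀ s, |a s - b s| ≤ δ) (r : ι) :
    |softmax a r - softmax b r| ≤ exp (2 * δ) - 1 := by
  have hba : ∀ s, |b s - a s| ≤ δ := fun s => abs_sub_comm (a s) (b s) ▸ hab s
  have hexp : 1 ≤ exp (2 * δ) := one_le_exp (by linarith [abs_nonneg (a r - b r), hab r])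
  rw [abs_sub_le_iff]
  constructor
  · nlinarith [softmax_le_exp_mul_softmax hba r, softmax_le_one b r, softmax_nonneg b r]
  · nlinarith [softmax_le_exp_mul_softmax hab r, softmax_le_one a r, softmax_nonneg a r]

lemma sum_exp_mul_ite_sub_softmax [DecidableEq ι] (a : ι → ℝ) (r : ι) :
    ∑ c, exp (a c) * ((if c = r then 1 else 0) - softmax a r) = 0 := by
  simp only [mul_sub, Finset.sum_sub_distrib, mul_ite, mul_one, mul_zero, Finset.sum_ite_eq',
    mem_univ, if_true]
  rw [← Finset.sum_mul, mul_comm, softmax_mul_sum_exp, sub_self]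

end Softmax

section Hamiltonian

variable {n q : ℕ} (A : Matrix (Fin n) (Fin n) ℝ) (J : Matrix (Fin q) (Fin q) ℝ) (h : Fin q → ℝ)

lemma gam_xVec (y : Fin n → Fin q) (i : Fin n) (s : Fin q) :
    gam A J (xVec y) i s = ∑ j, A i j * J s (y j) := by
  simp only [gam, xVec, Finset.mul_sum]
  rw [Finset.sum_comm]
  refine Finset.sum_congr rfl fun j _ => ?_
  simp [mul_comm]

lemma xHat_eq_softmax (y : Fin n → Fin q) (i : Fin n) (r : Fin q) :
    xHat A J h y i r = softmax (fun s => gam A J (xVec y) i s + h s) r :=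
  rfl

lemma gam_xVec_eq_sum_erase_add (y : Fin n → Fin q) (i j : Fin n) (s : Fin q) :
    gam A J (xVec y) j s = ∑ k ∈ univ.erase i, A j k * J s (y k) + A j i * J s (y i) := by
  rw [gam_xVec, ← Finset.sum_erase_add _ _ (mem_univ i)]

lemma gam_xVec_update_self {i : Fin n} (hd : A i i = 0) (y : Fin n → Fin q) (c s : Fin q) :
    gam A J (xVec (Function.update y i c)) i s = gam A J (xVec y) i s := by
  simp only [gam_xVec_eq_sum_erase_add A J _ i i, hd, zero_mul, add_zero]
  exact Finset.sum_congr rfl fun k hk => by rw [Function.update_of_ne (ne_of_mem_erase hk)]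

lemma sum_sum_interaction_eq_erase_add {i : Fin n} (hA : A.IsSymm) (hJ : J.IsSymm) (hd : A i i = 0)
    (y : Fin n → Fin q) :
    ∑ j, ∑ k, A j k * J (y j) (y k)
      = ∑ j ∈ univ.erase i, ∑ k ∈ univ.erase i, A j k * J (y j) (y k)
        + 2 * gam A J (xVec y) i (y i) := by
  have hcol : ∀ j, ∑ k, A j k * J (y j) (y k)
      = ∑ k ∈ univ.erase i, A j k * J (y j) (y k) + A i j * J (y i) (y j) := fun j => by
    rw [← Finset.sum_erase_add _ _ (mem_univ i), hA.apply j i, hJ.apply (y j) (y i)]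
  have hrow : ∑ j ∈ univ.erase i, A i j * J (y i) (y j) = gam A J (xVec y) i (y i) := by
    rw [gam_xVec, ← Finset.sum_erase_add _ _ (mem_univ i), hd, zero_mul, add_zero]
  rw [← Finset.sum_erase_add _ _ (mem_univ i), Finset.sum_congr rfl fun j _ => hcol j,
    Finset.sum_add_distrib, hrow, ← gam_xVec]
  ring

noncomputable def cavityH (i : Fin n) (y : Fin n → Fin q) : ℝ :=
  (1 / 2) * ∑ j ∈ univ.erase i, ∑ k ∈ univ.erase i, A j k * J (y j) (y k)
    + ∑ j ∈ univ.erase i, h (y j)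

lemma pottsH_eq_cavityH_add {i : Fin n} (hA : A.IsSymm) (hJ : J.IsSymm) (hd : A i i = 0)
    (y : Fin n → Fin q) :
    pottsH A J h y = cavityH A J h i y + (gam A J (xVec y) i (y i) + h (y i)) := by
  rw [pottsH, cavityH, sum_sum_interaction_eq_erase_add A J hA hJ hd, ← Finset.sum_erase_add _ _ (mem_univ i)]
  ring

lemma cavityH_update (i : Fin n) (y : Fin n → Fin q) (c : Fin q) :
    cavityH A J h i (Function.update y i c) = cavityH A J h i y := by
  have hy : ∀ j ∈ univ.erase i, Function.update y i c j = y j :=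
    fun j hj => Function.update_of_ne (ne_of_mem_erase hj) c y
  simp only [cavityH]
  congr 1
  · congr 1
    exact Finset.sum_congr rfl fun j hj => Finset.sum_congr rfl fun k hk => by rw [hy j hj, hy k hk]
  · exact Finset.sum_congr rfl fun j hj => by rw [hy j hj]

lemma exp_pottsH_update {i : Fin n} (hA : A.IsSymm) (hJ : J.IsSymm) (hd : A i i = 0)
    (y : Fin n → Fin q) (c : Fin q) :
    exp (pottsH A J h (Function.update y i c))
      = exp (cavityH A J h i y) * exp (gam A J (xVec y) i c + h c) := by
  rw [pottsH_eq_cavityH_add A J h hA hJ hd, cavityH_update, gam_xVec_update_self A J hd,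
    Function.update_self, exp_add]

end Hamiltonian

lemma sum_eq_zero_of_sum_update_eq_zero {ι α M : Type*} [Fintype ι] [DecidableEq ι] [Fintype α]
    [DecidableEq α] [AddCommMonoid M] (i : ι) {F : (ι → α) → M}
    (hF : ∀ y, ∑ c, F (Function.update y i c) = 0) : ∑ y, F y = 0 := by
  let e := Equiv.funSplitAt i α
  rw [← e.symm.sum_comp, Fintype.sum_prod_type, Finset.sum_comm]
  refine Finset.sum_eq_zero fun w _ => ?_
  rcases isEmpty_or_nonempty α with hα | ⟨⟨c₀⟩⟩
  · exact Finset.sum_of_isEmpty _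
  · have hfiber : ∀ c, e.symm (c, w) = Function.update (e.symm (c₀, w)) i c := fun c => by
      funext j
      rcases eq_or_ne j i with rfl | hj
      · simp [e]
      · simp [e, hj]
    exact (Finset.sum_congr rfl fun c _ => by rw [hfiber c]).trans (hF _)

section Expectation

variable {n q : ℕ} (A : Matrix (Fin n) (Fin n) ℝ) (J : Matrix (Fin q) (Fin q) ℝ) (h : Fin q → ℝ)

noncomputable def pottsExpect (f : (Fin n → Fin q) → ℝ) : ℝ :=
  ∑ y, pottsWeight A J h y * f y

lemma pottsWeight_nonneg (y : Fin n → Fin q) : 0 ≤ pottsWeight A J h y :=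
  div_nonneg (exp_pos _).le (Finset.sum_nonneg fun _ _ => (exp_pos _).le)

lemma sum_pottsWeight [Nonempty (Fin q)] : ∑ y, pottsWeight A J h y = 1 := by
  simp only [pottsWeight, ← Finset.sum_div]
  exact div_self (sum_exp_pos _).ne'

lemma pottsExpect_eq_sum_exp_div (f : (Fin n → Fin q) → ℝ) :
    pottsExpect A J h f
      = (∑ y, exp (pottsH A J h y) * f y) / ∑ y, exp (pottsH A J h y) := by
  simp only [pottsExpect, pottsWeight, Finset.sum_div, div_mul_eq_mul_div]

lemma pottsExpect_add (f g : (Fin n → Fin q) → ℝ) :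
    pottsExpect A J h (fun y => f y + g y) = pottsExpect A J h f + pottsExpect A J h g := by
  simp only [pottsExpect, mul_add, Finset.sum_add_distrib]

lemma pottsExpect_sum {κ : Type*} (s : Finset κ) (f : κ → (Fin n → Fin q) → ℝ) :
    pottsExpect A J h (fun y => ∑ k ∈ s, f k y) = ∑ k ∈ s, pottsExpect A J h (f k) := by
  simp only [pottsExpect, Finset.mul_sum]
  exact Finset.sum_comm

lemma pottsExpect_nonneg {f : (Fin n → Fin q) → ℝ} (hf : ∀ y, 0 ≤ f y) :
    0 ≤ pottsExpect A J h f :=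
  Finset.sum_nonneg fun y _ => mul_nonneg (pottsWeight_nonneg A J h y) (hf y)

lemma pottsExpect_le_of_le [Nonempty (Fin q)] {f : (Fin n → Fin q) → ℝ} {b : ℝ}
    (hf : ∀ y, f y ≤ b) : pottsExpect A J h f ≤ b :=
  calc pottsExpect A J h f ≤ ∑ y, pottsWeight A J h y * b :=
        Finset.sum_le_sum fun y _ => mul_le_mul_of_nonneg_left (hf y) (pottsWeight_nonneg A J h y)
    _ = b := by rw [← Finset.sum_mul, sum_pottsWeight, one_mul]

end Expectation

section Residuals

variable {n q : ℕ} (A : Matrix (Fin n) (Fin n) ℝ) (J : Matrix (Fin q) (Fin q) ℝ) (h : Fin q → ℝ)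

noncomputable def xResid (y : Fin n → Fin q) (i : Fin n) (r : Fin q) : ℝ :=
  xVec y i r - xHat A J h y i r

lemma abs_xResid_le_one (y : Fin n → Fin q) (i : Fin n) (r : Fin q) :
    |xResid A J h y i r| ≤ 1 := by
  have h0 := softmax_nonneg (fun s => gam A J (xVec y) i s + h s) r
  have h1 := softmax_le_one (fun s => gam A J (xVec y) i s + h s) r
  rw [xResid, xVec, xHat_eq_softmax, abs_le]
  split_ifs <;> constructor <;> linarith

lemma sum_update_exp_pottsH_mul_xResid {i : Fin n} (hA : A.IsSymm) (hJ : J.IsSymm)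
    (hd : A i i = 0) (r : Fin q) {g : (Fin n → Fin q) → ℝ}
    (hg : ∀ y c, g (Function.update y i c) = g y) (y : Fin n → Fin q) :
    ∑ c, exp (pottsH A J h (Function.update y i c))
      * (xResid A J h (Function.update y i c) i r * g (Function.update y i c)) = 0 := by
  set a : Fin q → ℝ := fun s => gam A J (xVec y) i s + h s
  have hhat : ∀ c, xHat A J h (Function.update y i c) i r = softmax a r := fun c => by
    simp only [xHat, softmax, a, gam_xVec_update_self A J hd]
  calc ∑ c, exp (pottsH A J h (Function.update y i c))
        * (xResid A J h (Function.update y i c) i r * g (Function.update y i c))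
      = exp (cavityH A J h i y) * g y
          * ∑ c, exp (a c) * ((if c = r then 1 else 0) - softmax a r) := by
        simp only [exp_pottsH_update A J h hA hJ hd, xResid, hhat, hg, xVec,
          Function.update_self, Finset.mul_sum]
        exact Finset.sum_congr rfl fun c _ => by ring
    _ = 0 := by rw [sum_exp_mul_ite_sub_softmax, mul_zero]

lemma pottsExpect_xResid_mul_eq_zero {i : Fin n} (hA : A.IsSymm) (hJ : J.IsSymm)
    (hd : A i i = 0) (r : Fin q) {g : (Fin n → Fin q) → ℝ}
    (hg : ∀ y c, g (Function.update y i c) = g y) :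
    pottsExpect A J h (fun y => xResid A J h y i r * g y) = 0 := by
  rw [pottsExpect_eq_sum_exp_div,
    sum_eq_zero_of_sum_update_eq_zero i (sum_update_exp_pottsH_mul_xResid A J h hA hJ hd r hg),
    zero_div]

noncomputable def xHatCavity (y : Fin n → Fin q) (i j : Fin n) (r : Fin q) : ℝ :=
  softmax (fun s => ∑ k ∈ univ.erase i, A j k * J s (y k) + h s) r

lemma xHatCavity_update (y : Fin n → Fin q) (i j : Fin n) (r c : Fin q) :
    xHatCavity A J h (Function.update y i c) i j r = xHatCavity A J h y i j r := by
  simp only [xHatCavity]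
  congr 2 with s
  congr 1
  exact Finset.sum_congr rfl fun k hk => by rw [Function.update_of_ne (ne_of_mem_erase hk)]

lemma abs_xHatCavity_sub_xHat_le {M ε : ℝ} (hJM : ∀ r s, |J r s| ≤ M) (hAε : ∀ i j, |A i j| ≤ ε)
    (y : Fin n → Fin q) (i j : Fin n) (r : Fin q) :
    |xHatCavity A J h y i j r - xHat A J h y j r| ≤ exp (2 * (ε * M)) - 1 := by
  rw [xHatCavity, xHat_eq_softmax]
  refine abs_softmax_sub_softmax_le (fun s => ?_) r
  rw [gam_xVec_eq_sum_erase_add A J y i, add_sub_add_right_eq_sub, sub_add_cancel_left, abs_neg,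
    abs_mul]
  exact mul_le_mul (hAε j i) (hJM s (y i)) (abs_nonneg _) ((abs_nonneg _).trans (hAε j i))

end Residuals

section Covariance

variable {n q : ℕ} {A : Matrix (Fin n) (Fin n) ℝ} {J : Matrix (Fin q) (Fin q) ℝ} (h : Fin q → ℝ)
  {M ε : ℝ}

lemma pottsExpect_xResid_mul_xResid_le (hA : A.IsSymm) (hJ : J.IsSymm)
    (hJM : ∀ r s, |J r s| ≤ M) (hAε : ∀ i j, |A i j| ≤ ε) {i j : Fin n} (hd : A i i = 0)
    (hij : i ≠ j) (r : Fin q) :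
    pottsExpect A J h (fun y => xResid A J h y i r * xResid A J h y j r)
      ≤ exp (2 * (ε * M)) - 1 := by
  have : Nonempty (Fin q) := ⟨r⟩
  have hsplit : (fun y => xResid A J h y i r * xResid A J h y j r)
      = fun y => xResid A J h y i r * (xVec y j r - xHatCavity A J h y i j r)
          + xResid A J h y i r * (xHatCavity A J h y i j r - xHat A J h y j r) := by
    funext y
    simp only [xResid]
    ring
  have horth : pottsExpect A J h
      (fun y => xResid A J h y i r * (xVec y j r - xHatCavity A J h y i j r)) = 0 :=
    pottsExpect_xResid_mul_eq_zero A J h hA hJ hd r fun y c => by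
      rw [xHatCavity_update, xVec, xVec, Function.update_of_ne hij.symm]
  rw [hsplit, pottsExpect_add, horth, zero_add]
  refine pottsExpect_le_of_le A J h fun y => ?_
  calc xResid A J h y i r * (xHatCavity A J h y i j r - xHat A J h y j r)
      ≤ |xResid A J h y i r| * |xHatCavity A J h y i j r - xHat A J h y j r| :=
        (le_abs_self _).trans_eq (abs_mul _ _)
    _ ≤ 1 * (exp (2 * (ε * M)) - 1) :=
        mul_le_mul (abs_xResid_le_one A J h y i r)
          (abs_xHatCavity_sub_xHat_le A J h hJM hAε y i j r) (abs_nonneg _) zero_le_one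
    _ = exp (2 * (ε * M)) - 1 := one_mul _

lemma pottsExpect_sum_sq_sum_xResid_le (hA : A.IsSymm) (hJ : J.IsSymm)
    (hJM : ∀ r s, |J r s| ≤ M) (hAε : ∀ i j, |A i j| ≤ ε) (hd : ∀ i, A i i = 0) :
    pottsExpect A J h (fun y => ∑ r, (∑ i, xResid A J h y i r) ^ 2)
      ≤ q * (n + n ^ 2 * (exp (2 * (ε * M)) - 1)) := by
  have hterm : ∀ r i j, pottsExpect A J h (fun y => xResid A J h y i r * xResid A J h y j r)
      ≤ (if i = j then 1 else 0) + (exp (2 * (ε * M)) - 1) := by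
    intro r i j
    have : Nonempty (Fin q) := ⟨r⟩
    rcases eq_or_ne i j with rfl | hij
    · have hεM : 0 ≤ ε * M :=
        mul_nonneg ((abs_nonneg _).trans (hAε i i)) ((abs_nonneg _).trans (hJM r r))
      have hsq : pottsExpect A J h (fun y => xResid A J h y i r * xResid A J h y i r) ≤ 1 :=
        pottsExpect_le_of_le A J h fun y => by
          nlinarith [abs_le.mp (abs_xResid_le_one A J h y i r)]
      rw [if_pos rfl]
      linarith [one_le_exp (by linarith : 0 ≤ 2 * (ε * M))]
    · rw [if_neg hij, zero_add]
      exact pottsExpect_xResid_mul_xResid_le h hA hJ hJM hAε (hd i) hij r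
  calc pottsExpect A J h (fun y => ∑ r, (∑ i, xResid A J h y i r) ^ 2)
      = ∑ r, ∑ i, ∑ j, pottsExpect A J h (fun y => xResid A J h y i r * xResid A J h y j r) := by
        simp only [sq, Finset.sum_mul_sum, pottsExpect_sum]
    _ ≤ ∑ r : Fin q, ∑ i : Fin n, ∑ j : Fin n,
          ((if i = j then 1 else 0) + (exp (2 * (ε * M)) - 1)) := by
        gcongr with r _ i _ j _
        exact hterm r i j
    _ = q * (n + n ^ 2 * (exp (2 * (ε * M)) - 1)) := by
        simp only [Finset.sum_add_distrib, Finset.sum_ite_eq, mem_univ, if_true, Finset.sum_const,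
          card_univ, Fintype.card_fin, nsmul_eq_mul]
        ring

end Covariance

lemma Matrix.abs_apply_le_iSup_iSup_abs {m m' : Type*} [Finite m] [Finite m'] (B : Matrix m m' ℝ)
    (i : m) (j : m') : |B i j| ≤ ⨆ i, ⨆ j, |B i j| :=
  (le_ciSup (f := fun j => |B i j|) (Set.finite_range _).bddAbove j).trans
    (le_ciSup (f := fun i => ⨆ j, |B i j|) (Set.finite_range _).bddAbove i)

theorem lemma_sum_close_general
    (q : ℕ) (J : Matrix (Fin q) (Fin q) ℝ) (hJ : J.IsSymm) (h : Fin q → ℝ)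
    (A : (n : ℕ) → Matrix (Fin n) (Fin n) ℝ) (hsymm : ∀ n, (A n).IsSymm)
    (hdiag : ∀ n : ℕ, ∀ i : Fin n, A n i i = 0)
    (hmax : Tendsto (fun n : ℕ => ⨆ i : Fin n, ⨆ j : Fin n, |A n i j|) atTop (nhds 0)) :
    Tendsto
      (fun n : ℕ =>
        (∑ y : Fin n → Fin q, pottsWeight (A n) J h y *
          ∑ r, (∑ i, (xVec y i r - xHat (A n) J h y i r)) ^ 2) / (n : ℝ) ^ 2)
      atTop (nhds 0) := by
  show Tendsto (fun n : ℕ => pottsExpect (A n) J h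
    (fun y => ∑ r, (∑ i, xResid (A n) J h y i r) ^ 2) / (n : ℝ) ^ 2) atTop (nhds 0)
  set ε : ℕ → ℝ := fun n => ⨆ i : Fin n, ⨆ j : Fin n, |A n i j|
  set M : ℝ := ⨆ r, ⨆ s, |J r s|
  have hbound : ∀ n : ℕ, 0 < n → pottsExpect (A n) J h
      (fun y => ∑ r, (∑ i, xResid (A n) J h y i r) ^ 2) / (n : ℝ) ^ 2
        ≤ q * ((n : ℝ)⁻¹ + (exp (2 * (ε n * M)) - 1)) := fun n hn => by
    have hn' : (0 : ℝ) < n := Nat.cast_pos.mpr hn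
    rw [div_le_iff₀ (by positivity)]
    calc _ ≤ q * (n + n ^ 2 * (exp (2 * (ε n * M)) - 1)) :=
          pottsExpect_sum_sq_sum_xResid_le h (hsymm n) hJ J.abs_apply_le_iSup_iSup_abs
            (A n).abs_apply_le_iSup_iSup_abs (hdiag n)
      _ = _ := by field_simp
  have hexp : Tendsto (fun t : ℝ => exp (2 * (t * M)) - 1) (nhds 0) (nhds 0) := by
    simpa using (show Continuous fun t : ℝ => exp (2 * (t * M)) - 1 by fun_prop).tendsto 0
  have hlim : Tendsto (fun n : ℕ => (q : ℝ) * ((n : ℝ)⁻¹ + (exp (2 * (ε n * M)) - 1))) atTop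
      (nhds 0) := by
    simpa using ((tendsto_inv_atTop_zero.comp tendsto_natCast_atTop_atTop).add
      (hexp.comp hmax)).const_mul (q : ℝ)
  exact squeeze_zero' (Eventually.of_forall fun n => div_nonneg
      (pottsExpect_nonneg _ _ _ fun y => Finset.sum_nonneg fun r _ => sq_nonneg _) (sq_nonneg _))
    ((eventually_gt_atTop 0).mono hbound) hlim

theorem lemma_sum_close
    (q : ℕ) (hq : 2 ≤ q) (J : Matrix (Fin q) (Fin q) ℝ) (hJ : J.IsSymm) (h : Fin q → ℝ)
    (A : (n : ℕ) → Matrix (Fin n) (Fin n) ℝ) (hsymm : ∀ n, (A n).IsSymm)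
    (hMF : meanFieldAssumption A)
    (hdiag : ∀ n : ℕ, ∀ i : Fin n, A n i i = 0)
    (hmax : Tendsto (fun n : ℕ => ⨆ i : Fin n, ⨆ j : Fin n, |A n i j|) atTop (nhds 0)) :
    Tendsto
      (fun n : ℕ =>
        (∑ y : Fin n → Fin q, pottsWeight (A n) J h y *
          ∑ r, (∑ i, (xVec y i r - xHat (A n) J h y i r)) ^ 2) / (n : ℝ) ^ 2)
      atTop (nhds 0) :=
  lemma_sum_close_general q J hJ h A hsymm hdiag hmax
end

section
/- Let (A_n) be a sequence of symmetric real n×n matrices satisfying the mean-field assumption. Then for every ε > 0 there exists a sequence of finite sets D_n(ε) ⊂ ℝ^n such that: (i) for every v ∈ [0,1]^n there exists w ∈ D_n(ε) with ‖A_n v − w‖₂ ≤ √n·ε (D_n(ε) is a √n·ε-net of {A_n v : v ∈ [0,1]^n} in Euclidean norm), and (ii) (1/n)·log |D_n(ε)| → 0 as n → ∞. -/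
/-!
Diagonalize `A` in an orthonormal eigenbasis with eigenvalues `μᵢ`. A vector `v` of the cube has
`‖v‖ ≤ √n`, so the coordinates of `A v` are `μᵢ cᵢ` with `∑ cᵢ² ≤ n`. The coordinates with
`|μᵢ| ≤ ε / 2` are rounded to `0`, at a cost of at most `√n ε / 2`. The others lie in an ellipsoid
with semi-axes `√n |μᵢ|`; comparing the volume of disjoint balls of radius `√n ε / 4` around a
maximal `√n ε / 2`-separated set with the volume of the doubled ellipsoid shows that it is covered
by at most `∏ 8 |μᵢ| / ε` balls of radius `√n ε / 2`. As `8 |μᵢ| / ε ≥ 4`, the logarithm of this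
product is at most `∑ 16 μᵢ² / ε² ≤ 16 tr (A²) / ε²`, which is `o(n)` by the mean-field assumption.
-/

open Finset Filter Real

open scoped NNReal ENNReal

namespace Metric

variable {X : Type*} [PseudoEMetricSpace X] {ε : ℝ≥0} {A : Set X}

theorem packingNumber_le_of_forall_finset {N : ℕ}
    (h : ∀ F : Finset X, ↑F ⊆ A → IsSeparated ε (F : Set X) → F.card ≤ N) :
    packingNumber ε A ≤ N := by
  refine iSup₂_le fun C hCA => iSup_le fun hC => ?_
  by_contra! hlt
  obtain ⟨t, htC, ht⟩ := Set.exists_subset_encard_eq (Order.add_one_le_of_lt hlt)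
  have htfin : t.Finite := Set.finite_of_encard_eq_coe ht
  have hcard := h htfin.toFinset (by simpa using htC.trans hCA) (by simpa using hC.subset htC)
  rw [htfin.encard_eq_coe_toFinset_card] at ht
  norm_cast at ht
  omega

theorem exists_finset_isCover_of_packingNumber_le {N : ℕ} (h : packingNumber ε A ≤ N) :
    ∃ F : Finset X, IsCover ε A F ∧ F.card ≤ N := by
  have hcov := (coveringNumber_le_packingNumber ε A).trans h
  obtain ⟨C, -, hCfin, hC, hCcard⟩ :=
    exists_set_encard_eq_coveringNumber (hcov.trans_lt (ENat.natCast_lt_top N)).ne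
  refine ⟨hCfin.toFinset, by simpa using hC, ?_⟩
  rw [← hCcard, hCfin.encard_eq_coe_toFinset_card] at hcov
  exact_mod_cast hcov

end Metric

section Ellipsoid

open Matrix Metric MeasureTheory

variable {ι : Type*} [Fintype ι]

-- a coordinate with `a i = 0` is unconstrained, since `x / 0 = 0`
def ellipsoid (a : ι → ℝ) : Set (EuclideanSpace ℝ ι) := {x | ∑ i, (x i / a i) ^ 2 ≤ 1}

theorem zero_mem_ellipsoid (a : ι → ℝ) : 0 ∈ ellipsoid a := by simp [ellipsoid]

theorem ellipsoid_subset_image_closedBall [DecidableEq ι] {a : ι → ℝ} (ha : ∀ i, a i ≠ 0) :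
    ellipsoid a ⊆ toEuclideanLin (diagonal a) '' closedBall 0 1 := by
  intro x hx
  refine ⟨WithLp.toLp 2 fun i => x i / a i, ?_, ?_⟩
  · rw [mem_closedBall_zero_iff, EuclideanSpace.norm_eq, Real.sqrt_le_one]
    simp only [Real.norm_eq_abs, sq_abs]
    exact hx
  · ext i
    simp [mulVec_diagonal, mul_div_cancel₀ _ (ha i)]

theorem closedBall_subset_ellipsoid_two_mul {a : ι → ℝ} {r : ℝ} (hr : 0 < r) (ha : ∀ i, r ≤ a i)
    {y : EuclideanSpace ℝ ι} (hy : y ∈ ellipsoid a) :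
    closedBall y r ⊆ ellipsoid (2 * a) := by
  intro z hz
  have hzy : ∑ i, (z i - y i) ^ 2 ≤ r ^ 2 := by
    rw [mem_closedBall, EuclideanSpace.dist_eq, Real.sqrt_le_left hr.le] at hz
    simpa [Real.dist_eq, sq_abs] using hz
  have hcoord : ∀ i, (z i / (2 * a i)) ^ 2 ≤ ((y i / a i) ^ 2 + (z i - y i) ^ 2 / r ^ 2) / 2 := by
    intro i
    have hai : 0 < a i := hr.trans_le (ha i)
    have hdiff : ((z i - y i) / a i) ^ 2 ≤ (z i - y i) ^ 2 / r ^ 2 := by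
      rw [div_pow]
      gcongr
      exact ha i
    have hsplit : z i / (2 * a i) = (y i / a i + (z i - y i) / a i) / 2 := by
      field_simp
      ring
    rw [hsplit]
    nlinarith [sq_nonneg (y i / a i - (z i - y i) / a i)]
  calc ∑ i, (z i / (2 * a i)) ^ 2
      ≤ ∑ i, ((y i / a i) ^ 2 + (z i - y i) ^ 2 / r ^ 2) / 2 :=
        sum_le_sum fun i _ => hcoord i
    _ = ((∑ i, (y i / a i) ^ 2) + (∑ i, (z i - y i) ^ 2) / r ^ 2) / 2 := by
      rw [← sum_div, sum_add_distrib, ← sum_div]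
    _ ≤ (1 + r ^ 2 / r ^ 2) / 2 := by
      gcongr
      exact hy
    _ = 1 := by
      field_simp
      norm_num

theorem volume_image_toEuclideanLin_diagonal [DecidableEq ι] (a : ι → ℝ)
    (S : Set (EuclideanSpace ℝ ι)) :
    volume (toEuclideanLin (diagonal a) '' S) = ENNReal.ofReal |∏ i, a i| * volume S := by
  rw [Measure.addHaar_image_linearMap, ← det_diagonal, ← LinearMap.det_toLin (PiLp.basisFun 2 ℝ ι)]
  rfl

theorem card_le_of_isSeparated_subset_ellipsoid {a : ι → ℝ} {s : ℝ≥0} (hs : 0 < s)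
    (ha : ∀ i, (s : ℝ) ≤ a i) {F : Finset (EuclideanSpace ℝ ι)} (hF : ↑F ⊆ ellipsoid a)
    (hsep : IsSeparated (s : ℝ≥0∞) (F : Set (EuclideanSpace ℝ ι))) :
    (F.card : ℝ) ≤ ∏ i, 4 * a i / s := by
  classical
  set r : ℝ := s / 2 with hr_def
  have hr : 0 < r := by positivity
  have hra : ∀ i, r ≤ a i := fun i => by linarith [ha i, NNReal.coe_nonneg s, hr_def]
  have hdisj : (F : Set (EuclideanSpace ℝ ι)).PairwiseDisjoint (closedBall · r) := by
    intro x hx y hy hxy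
    refine closedBall_disjoint_closedBall ?_
    have : (s : ℝ≥0∞) < edist x y := hsep hx hy hxy
    rw [edist_nndist, ENNReal.coe_lt_coe, ← NNReal.coe_lt_coe, coe_nndist] at this
    linarith
  have hcover :
      (⋃ y ∈ F, closedBall y r) ⊆ toEuclideanLin (diagonal (2 * a)) '' closedBall 0 1 := by
    refine (Set.iUnion₂_subset fun y (hy : y ∈ F) =>
      closedBall_subset_ellipsoid_two_mul hr hra (hF hy)).trans ?_
    exact ellipsoid_subset_image_closedBall fun i => by
      simp only [Pi.mul_apply, Pi.ofNat_apply]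
      linarith [hra i]
  have hvol : (F.card : ℝ≥0∞) * ENNReal.ofReal (r ^ Fintype.card ι) *
        volume (closedBall (0 : EuclideanSpace ℝ ι) 1)
      ≤ ENNReal.ofReal (∏ i, 2 * a i) * volume (closedBall (0 : EuclideanSpace ℝ ι) 1) := by
    calc _ = ∑ y ∈ F, volume (closedBall y r) := by
          simp only [Measure.addHaar_closedBall' _ _ hr.le, sum_const, nsmul_eq_mul,
            finrank_euclideanSpace, mul_assoc]
      _ = volume (⋃ y ∈ F, closedBall y r) :=
          (measure_biUnion_finset hdisj fun _ _ => measurableSet_closedBall).symm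
      _ ≤ _ := by
          grw [hcover, volume_image_toEuclideanLin_diagonal, abs_of_nonneg]
          · rfl
          exact prod_nonneg fun i _ => by simp; linarith [hra i]
  rw [ENNReal.mul_le_mul_iff_left (measure_closedBall_pos _ _ one_pos).ne'
    measure_closedBall_lt_top.ne, ← ENNReal.ofReal_natCast, ← ENNReal.ofReal_mul (by positivity),
    ENNReal.ofReal_le_ofReal_iff (prod_nonneg fun i _ => by linarith [hra i])] at hvol
  calc (F.card : ℝ) ≤ (∏ i, 2 * a i) / r ^ Fintype.card ι := by
        rw [le_div_iff₀ (by positivity)]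
        exact hvol
    _ = ∏ i, 4 * a i / s := by
        rw [← card_univ, ← prod_const, ← prod_div_distrib]
        refine prod_congr rfl fun i _ => ?_
        field_simp
        ring

theorem exists_finset_isCover_ellipsoid {a : ι → ℝ} {s : ℝ≥0} (hs : 0 < s)
    (ha : ∀ i, (s : ℝ) ≤ a i) :
    ∃ F : Finset (EuclideanSpace ℝ ι),
      IsCover s (ellipsoid a) F ∧ (F.card : ℝ) ≤ ∏ i, 4 * a i / s := by
  obtain ⟨F, hF, hcard⟩ := exists_finset_isCover_of_packingNumber_le <|
    packingNumber_le_of_forall_finset (N := ⌊∏ i, 4 * a i / s⌋₊) fun F hFA hFsep =>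
      Nat.le_floor (card_le_of_isSeparated_subset_ellipsoid hs ha hFA hFsep)
  refine ⟨F, hF, (Nat.cast_le.2 hcard).trans (Nat.floor_le (prod_nonneg fun i _ => ?_))⟩
  exact div_nonneg (by linarith [ha i, s.coe_nonneg]) s.coe_nonneg

end Ellipsoid

section Net

open Matrix Metric

variable {ι : Type*} [Fintype ι]

theorem EuclideanSpace.dist_dite_sq {p : ι → Prop} [DecidablePred p] (x : EuclideanSpace ℝ ι)
    (z : EuclideanSpace ℝ {i // p i}) :
    dist x (WithLp.toLp 2 fun i => if h : p i then z ⟨i, h⟩ else 0) ^ 2 =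
      dist (WithLp.toLp 2 fun i : {i // p i} => x i) z ^ 2 + ∑ i : {i // ¬p i}, x i ^ 2 := by
  simp only [EuclideanSpace.dist_eq, Real.dist_eq, sq_abs]
  rw [sq_sqrt (by positivity), sq_sqrt (by positivity), ← Fintype.sum_subtype_add_sum_subtype p]
  congr 1 <;> refine sum_congr rfl fun i _ => ?_ <;> simp [i.2]

theorem EuclideanSpace.norm_toLp_le_sqrt_card {v : ι → ℝ} (hv : ∀ j, |v j| ≤ 1) :
    ‖WithLp.toLp 2 v‖ ≤ √(Fintype.card ι) := by
  rw [EuclideanSpace.norm_eq]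
  refine sqrt_le_sqrt ?_
  simpa [sq_abs] using
    sum_le_sum fun j (_ : j ∈ univ) => (pow_le_one₀ (abs_nonneg _) (hv j) : |v j| ^ 2 ≤ 1)

theorem Matrix.trace_toEuclideanLin [DecidableEq ι] (A : Matrix ι ι ℝ) :
    LinearMap.trace ℝ _ (toEuclideanLin A) = A.trace := by
  rw [LinearMap.trace_eq_matrix_trace ℝ (PiLp.basisFun 2 ℝ ι)]
  exact congrArg trace (LinearMap.toMatrix_toLin _ _ A)

theorem log_prod_le_sum_sq_div_four {t : ι → ℝ} (ht : ∀ i, 4 ≤ t i) :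
    log (∏ i, t i) ≤ ∑ i, t i ^ 2 / 4 := by
  rw [log_prod fun i _ => by linarith [ht i]]
  refine sum_le_sum fun i _ => ?_
  nlinarith [log_le_sub_one_of_pos (by linarith [ht i] : 0 < t i), ht i]

theorem exists_finset_net_toEuclideanLin_diagonal [DecidableEq ι] (μ : ι → ℝ) {ε : ℝ}
    (hε : 0 < ε) :
    ∃ D : Finset (EuclideanSpace ℝ ι),
      (∀ c : EuclideanSpace ℝ ι, ‖c‖ ≤ 1 → ∃ y ∈ D, dist (toEuclideanLin (diagonal μ) c) y ≤ ε) ∧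
      log D.card ≤ 16 / ε ^ 2 * ∑ i, μ i ^ 2 := by
  -- only the coordinates with `|μ i| > ε / 2` are resolved by the net, the others are set to `0`
  set p : ι → Prop := fun i => ε / 2 < |μ i|
  let s : ℝ≥0 := ⟨ε / 2, by positivity⟩
  obtain ⟨F, hF, hcard⟩ :=
    exists_finset_isCover_ellipsoid (a := fun i : {i // p i} => |μ i|) (s := s)
      (NNReal.coe_pos.1 (half_pos hε)) fun i => i.2.le
  have hs : (s : ℝ) = ε / 2 := rfl
  simp only [hs] at hcard
  let extend : EuclideanSpace ℝ {i // p i} → EuclideanSpace ℝ ι :=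
    fun z => WithLp.toLp 2 fun i => if h : p i then z ⟨i, h⟩ else 0
  refine ⟨F.image extend, fun c hc => ?_, ?_⟩
  · set y := toEuclideanLin (diagonal μ) c
    have hy : ∀ i, y i = μ i * c i := fun i => by simp [y, mulVec_diagonal]
    have hc2 : ∑ i, c i ^ 2 ≤ 1 := by
      rw [EuclideanSpace.norm_eq, sqrt_le_one] at hc
      simpa only [Real.norm_eq_abs, sq_abs] using hc
    have hyK : (WithLp.toLp 2 fun i : {i // p i} => y i) ∈ ellipsoid fun i : {i // p i} => |μ i| :=
      calc ∑ i : {i // p i}, (y i / |μ i|) ^ 2 = ∑ i : {i // p i}, c i ^ 2 := by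
            refine sum_congr rfl fun i _ => ?_
            have : μ i ^ 2 ≠ 0 := pow_ne_zero 2 (abs_pos.1 ((half_pos hε).trans i.2))
            rw [hy, div_pow, mul_pow, sq_abs, mul_div_cancel_left₀ _ this]
        _ ≤ ∑ i, c i ^ 2 := by
            rw [← Fintype.sum_subtype_add_sum_subtype p]
            exact le_add_of_nonneg_right (sum_nonneg fun i _ => sq_nonneg _)
        _ ≤ 1 := hc2
    obtain ⟨z, hzF, hz⟩ := Set.mem_iUnion₂.1 (isCover_iff_subset_iUnion_closedBall.1 hF hyK)
    refine ⟨extend z, mem_image_of_mem _ hzF, ?_⟩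
    have hsmall : ∑ i : {i // ¬p i}, y i ^ 2 ≤ (ε / 2) ^ 2 :=
      calc ∑ i : {i // ¬p i}, y i ^ 2 ≤ ∑ i : {i // ¬p i}, (ε / 2) ^ 2 * c i ^ 2 := by
            refine sum_le_sum fun i _ => ?_
            rw [hy, mul_pow, ← sq_abs (μ i)]
            gcongr
            exact not_lt.1 i.2
        _ ≤ (ε / 2) ^ 2 * ∑ i, c i ^ 2 := by
            rw [← mul_sum, ← Fintype.sum_subtype_add_sum_subtype p]
            gcongr
            exact le_add_of_nonneg_left (sum_nonneg fun i _ => sq_nonneg _)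
        _ ≤ (ε / 2) ^ 2 := mul_le_of_le_one_right (sq_nonneg _) hc2
    have hlarge : dist (WithLp.toLp 2 fun i : {i // p i} => y i) z ^ 2 ≤ (ε / 2) ^ 2 :=
      pow_le_pow_left₀ dist_nonneg (mem_closedBall.1 hz) 2
    rw [← pow_le_pow_iff_left₀ dist_nonneg hε.le two_ne_zero, EuclideanSpace.dist_dite_sq]
    nlinarith
  · have hfactor : ∀ i : {i // p i}, 4 ≤ 4 * |μ i| / (ε / 2) := fun i => by
      rw [le_div_iff₀ (half_pos hε)]
      nlinarith [i.2]
    have hF0 : F.Nonempty := by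
      simpa using hF.nonempty ⟨0, zero_mem_ellipsoid _⟩
    calc log (F.image extend).card ≤ log (∏ i : {i // p i}, 4 * |μ i| / (ε / 2)) :=
          log_le_log (by simpa using hF0) ((Nat.cast_le.2 card_image_le).trans hcard)
      _ ≤ ∑ i : {i // p i}, (4 * |μ i| / (ε / 2)) ^ 2 / 4 := log_prod_le_sum_sq_div_four hfactor
      _ = 16 / ε ^ 2 * ∑ i : {i // p i}, μ i ^ 2 := by
          rw [mul_sum]
          refine sum_congr rfl fun i _ => ?_
          rw [div_pow, mul_pow, sq_abs]
          field_simp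
          ring
      _ ≤ 16 / ε ^ 2 * ∑ i, μ i ^ 2 := by
          rw [← Fintype.sum_subtype_add_sum_subtype p]
          gcongr
          exact le_add_of_nonneg_right (sum_nonneg fun i _ => sq_nonneg _)

end Net

namespace LinearMap.IsSymmetric

open Matrix Module

variable {E : Type*} [NormedAddCommGroup E] [InnerProductSpace ℝ E] [FiniteDimensional ℝ E]
  {T : E →ₗ[ℝ] E}

theorem trace_comp_self (hT : T.IsSymmetric) {n : ℕ} (hn : finrank ℝ E = n) :
    LinearMap.trace ℝ E (T ∘ₗ T) = ∑ i, hT.eigenvalues hn i ^ 2 := by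
  rw [LinearMap.trace_eq_sum_inner _ (hT.eigenvectorBasis hn)]
  refine sum_congr rfl fun i _ => ?_
  simp [hT.apply_eigenvectorBasis, inner_smul_right, (hT.eigenvectorBasis hn).orthonormal.1 i, sq]

theorem exists_finset_net (hT : T.IsSymmetric) {ε : ℝ} (hε : 0 < ε) {R : ℝ} (hR : 0 ≤ R) :
    ∃ D : Finset E, (∀ x, ‖x‖ ≤ R → ∃ y ∈ D, dist (T x) y ≤ ε * R) ∧
      log D.card ≤ 16 / ε ^ 2 * LinearMap.trace ℝ E (T ∘ₗ T) := by
  classical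
  set b := hT.eigenvectorBasis rfl
  obtain ⟨D, hD, hcard⟩ := exists_finset_net_toEuclideanLin_diagonal (hT.eigenvalues rfl) hε
  have hrepr : ∀ u, b.repr (T u) = toEuclideanLin (diagonal (hT.eigenvalues rfl)) (b.repr u) :=
    fun u => by ext i; simp [b, mulVec_diagonal, hT.eigenvectorBasis_apply_self_apply]
  have hDne : D.Nonempty := by
    obtain ⟨y, hy, -⟩ := hD 0 (by simp)
    exact ⟨y, hy⟩
  refine ⟨D.image fun y => R • b.repr.symm y, fun x hx => ?_, ?_⟩
  · rcases hR.eq_or_lt with rfl | hRpos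
    · obtain ⟨y, hy⟩ := hDne
      exact ⟨_, mem_image_of_mem _ hy, by simp [norm_le_zero_iff.1 hx]⟩
    obtain ⟨y, hy, hdist⟩ := hD (b.repr (R⁻¹ • x)) <| by
      rw [LinearIsometryEquiv.norm_map, norm_smul, norm_inv, Real.norm_of_nonneg hR]
      exact inv_mul_le_one_of_le₀ hx hR
    refine ⟨_, mem_image_of_mem _ hy, ?_⟩
    calc dist (T x) (R • b.repr.symm y) = dist (R • T (R⁻¹ • x)) (R • b.repr.symm y) := by
          rw [map_smul, smul_inv_smul₀ hRpos.ne']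
      _ = R * dist (T (R⁻¹ • x)) (b.repr.symm y) := by
          rw [dist_smul₀, Real.norm_of_nonneg hR]
      _ ≤ ε * R := by
          rw [← b.repr.dist_map, LinearIsometryEquiv.apply_symm_apply, hrepr, mul_comm]
          gcongr
  · rw [hT.trace_comp_self rfl]
    exact (log_le_log (by simpa using hDne) (Nat.cast_le.2 card_image_le)).trans hcard

end LinearMap.IsSymmetric

theorem net_lemma
    (A : (n : ℕ) → Matrix (Fin n) (Fin n) ℝ) (hsymm : ∀ n, (A n).IsSymm)
    (hMF : meanFieldAssumption A) (ε : ℝ) (hε : 0 < ε) :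
    ∃ D : (n : ℕ) → Finset (Fin n → ℝ),
      (∀ n : ℕ, ∀ v : Fin n → ℝ, (∀ j, v j ∈ Set.Icc (0:ℝ) 1) →
        ∃ w ∈ D n,
          Real.sqrt (∑ i, ((A n).mulVec v i - w i) ^ 2) ≤ Real.sqrt n * ε) ∧
      Tendsto (fun n : ℕ => Real.log ((D n).card) / n) atTop (nhds 0) := by
  choose D hnet hlog using fun n => (Matrix.isSymmetric_toEuclideanLin_iff.2
    (Matrix.isHermitian_iff_isSymm.2 (hsymm n))).exists_finset_net hε (sqrt_nonneg n)
  refine ⟨fun n => (D n).image WithLp.ofLp, fun n v hv => ?_, ?_⟩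
  · obtain ⟨y, hy, hdist⟩ := hnet n (WithLp.toLp 2 v) <| by
      simpa using EuclideanSpace.norm_toLp_le_sqrt_card fun j =>
        abs_le.2 ⟨by linarith [(hv j).1], (hv j).2⟩
    refine ⟨y.ofLp, mem_image_of_mem _ hy, ?_⟩
    simpa [EuclideanSpace.dist_eq, Real.dist_eq, sq_abs, mul_comm] using hdist
  have hbound : ∀ n : ℕ, log ((D n).image WithLp.ofLp).card / n ≤
      16 / ε ^ 2 * ((A n * A n).trace / n) := fun n => by
    rw [card_image_of_injective _ (WithLp.ofLp_injective 2), ← mul_div_assoc,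
      ← Matrix.trace_toEuclideanLin, Matrix.toLpLin_mul_same]
    exact div_le_div_of_nonneg_right (hlog n) n.cast_nonneg
  refine squeeze_zero (fun n => div_nonneg (log_natCast_nonneg _) n.cast_nonneg) hbound ?_
  simpa using hMF.2.const_mul (16 / ε ^ 2)
end

section
/- Let p ∈ (0,1) and β ∈ ℝ with β²·p·(1−p) ≤ 1. Then σ = 0 is the only real solution of the equation σ = tanh(β·(1−p)·tanh(β·p·σ)). -/
/-!
Write `tanh x = c x` with `c = tanh x / x ∈ [0, 1)`. A fixed point `σ` of
`σ ↦ tanh (a tanh (b σ))` then satisfies `σ = a b c₁ c₂ σ` with `c₁, c₂ ∈ [0, 1)`,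
and `a b c₁ c₂ < 1` as soon as `a b ≤ 1`, so `σ = 0`. Here `a = β (1 - p)` and `b = β p`.
-/

open Real

namespace Real

lemma tanh_pos {x : ℝ} (hx : 0 < x) : 0 < tanh x := by
  rw [tanh_eq_sinh_div_cosh]
  exact div_pos (sinh_pos_iff.2 hx) (cosh_pos x)

lemma tanh_lt_self {x : ℝ} (hx : 0 < x) : tanh x < x := by
  rw [tanh_eq_sinh_div_cosh, div_lt_iff₀ (cosh_pos x)]
  have hmono : StrictMonoOn (fun y ↦ y * cosh y - sinh y) (Set.Ici 0) := by
    refine strictMonoOn_of_deriv_pos (convex_Ici 0) (by fun_prop) fun y hy ↦ ?_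
    rw [interior_Ici, Set.mem_Ioi] at hy
    have hderiv : HasDerivAt (fun y ↦ y * cosh y - sinh y)
        (1 * cosh y + y * sinh y - cosh y) y :=
      ((hasDerivAt_id y).mul (hasDerivAt_cosh y)).sub (hasDerivAt_sinh y)
    rw [hderiv.deriv]
    nlinarith [mul_pos hy (sinh_pos_iff.2 hy)]
  have := hmono Set.self_mem_Ici (Set.mem_Ici.2 hx.le) hx
  simp only [zero_mul, sinh_zero, sub_zero] at this
  linarith

lemma tanh_div_self_mem_Ico (x : ℝ) : tanh x / x ∈ Set.Ico 0 1 := by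
  have hpos {y : ℝ} (hy : 0 < y) : tanh y / y ∈ Set.Ico 0 1 :=
    ⟨div_nonneg (tanh_pos hy).le hy.le, (div_lt_one hy).2 (tanh_lt_self hy)⟩
  rcases lt_trichotomy x 0 with hx | rfl | hx
  · simpa only [tanh_neg, neg_div_neg_eq] using hpos (neg_pos.2 hx)
  · simp
  · exact hpos hx

end Real

lemma eq_zero_of_eq_tanh_mul_tanh {a b σ : ℝ} (hab : a * b ≤ 1)
    (hσ : σ = tanh (a * tanh (b * σ))) : σ = 0 := by
  set c₁ := tanh (b * σ) / (b * σ)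
  set c₂ := tanh (a * tanh (b * σ)) / (a * tanh (b * σ))
  obtain ⟨hc₁, hc₁'⟩ := tanh_div_self_mem_Ico (b * σ)
  obtain ⟨hc₂, hc₂'⟩ := tanh_div_self_mem_Ico (a * tanh (b * σ))
  have hlin : σ = (a * b) * (c₁ * c₂) * σ := by
    have h₁ : tanh (b * σ) = c₁ * (b * σ) :=
      (div_mul_cancel_of_imp fun h ↦ by simp [h]).symm
    have h₂ : tanh (a * tanh (b * σ)) = c₂ * (a * tanh (b * σ)) :=
      (div_mul_cancel_of_imp fun h ↦ by simp [h]).symm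
    calc σ = c₂ * (a * (c₁ * (b * σ))) := hσ.trans (by rw [h₂, h₁])
      _ = (a * b) * (c₁ * c₂) * σ := by ring
  have hlt : (a * b) * (c₁ * c₂) < 1 :=
    calc (a * b) * (c₁ * c₂) ≤ 1 * (c₁ * c₂) :=
        mul_le_mul_of_nonneg_right hab (mul_nonneg hc₁ hc₂)
      _ < 1 := by rw [one_mul]; exact mul_lt_one_of_nonneg_of_lt_one_left hc₁ hc₁' hc₂'.le
  have hzero : (1 - (a * b) * (c₁ * c₂)) * σ = 0 := by linear_combination hlin
  exact (mul_eq_zero.1 hzero).resolve_left (by linarith)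

theorem fixed_point_subcritical_general (p β : ℝ)
    (hβ : β ^ 2 * p * (1 - p) ≤ 1) :
    {σ : ℝ | σ = Real.tanh (β * (1 - p) * Real.tanh (β * p * σ))} = {0} := by
  ext σ
  refine ⟨fun hσ ↦ eq_zero_of_eq_tanh_mul_tanh ?_ hσ, fun hσ ↦ ?_⟩
  · linear_combination hβ
  · simp [Set.mem_singleton_iff.1 hσ]

theorem fixed_point_subcritical (p β : ℝ) (hp : p ∈ Set.Ioo (0 : ℝ) 1)
    (hβ : β ^ 2 * p * (1 - p) ≤ 1) :
    {σ : ℝ | σ = Real.tanh (β * (1 - p) * Real.tanh (β * p * σ))} = {0} :=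
  fixed_point_subcritical_general p β hβ
end
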